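/- arXiv:2510.22554 — 6 statements merged into one kernel-verified Lean document; each statement's English description precedes it below -/
import Mathlib

section
/- Let q be an odd prime and let v be a probability vector on ZMod q with v(−l) = v(l) for all l and v(0) < 1. Then for every r ∈ ZMod q with r ≠ 0, the (real) eigenvalue η_r = ∑_{l ∈ ZMod q} v_l·cos(2π·(l·r).val/q) satisfies −1 < η_r < 1. (This expresses the aperiodicity and irreducibility, hence ergodicity, of the reversible circulant random walk when q is prime and larger than 2.) -/
open scoped BigOperators

/-- Ergodicity of the reversible circulant random walk for odd prime `q`: if `v` is a symmetric
probability vector with `v 0 < 1`, then every nontrivial (real) eigenvalue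
`η_r = ∑_l v l cos(2π (l·r).val / q)`, `r ≠ 0`, lies strictly between `-1` and `1`. -/
theorem circulant_ergodic_eigenvalue_bound (q : ℕ) [NeZero q]
    (hq : Nat.Prime q) (hodd : Odd q)
    (v : ZMod q → ℝ) (hv : ∀ l, 0 ≤ v l) (hsum : ∑ l : ZMod q, v l = 1)
    (hsymm : ∀ l : ZMod q, v (-l) = v l) (h0 : v 0 < 1)
    (r : ZMod q) (hr : r ≠ 0) :
    -1 < ∑ l : ZMod q, v l * Real.cos (2 * Real.pi * ((l * r).val : ℝ) / q) ∧
    ∑ l : ZMod q, v l * Real.cos (2 * Real.pi * ((l * r).val : ℝ) / q) < 1 := by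
  have hqR : (0 : ℝ) < q := by exact_mod_cast (NeZero.pos q)
  have hpi := Real.pi_pos
  -- cos never equals -1 at these angles (q odd)
  have hcosne : ∀ l : ZMod q, Real.cos (2 * Real.pi * ((l * r).val : ℝ) / q) ≠ -1 := by
    intro l hc
    rcases Real.cos_eq_neg_one_iff.1 hc with ⟨n, hn⟩
    have hq0 : (q : ℝ) ≠ 0 := ne_of_gt hqR
    have h' : (Real.pi + (n : ℝ) * (2 * Real.pi)) * q = 2 * Real.pi * ((l * r).val : ℝ) := by
      rw [hn]; field_simp
    have hk : Real.pi * ((q : ℝ) * (2 * n + 1)) = Real.pi * (2 * ((l * r).val : ℝ)) := by ring_nf; ring_nf at h'; linarith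
    have hk2 : ((q : ℝ)) * (2 * n + 1) = 2 * ((l * r).val : ℝ) := mul_left_cancel₀ (ne_of_gt hpi) hk
    have hkz : (q : ℤ) * (2 * n + 1) = 2 * ((l * r).val : ℤ) := by exact_mod_cast hk2
    have : Odd ((q : ℤ) * (2 * n + 1)) := hodd.natCast.mul (odd_two_mul_add_one n)
    rw [hkz] at this
    exact (Int.not_odd_iff_even.2 (even_two_mul _)) this
  have hcosgt : ∀ l : ZMod q, -1 < Real.cos (2 * Real.pi * ((l * r).val : ℝ) / q) :=
    fun l => lt_of_le_of_ne (Real.neg_one_le_cos _) (Ne.symm (hcosne l))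
  -- cos < 1 when l ≠ 0
  have hcoslt : ∀ l : ZMod q, l ≠ 0 → Real.cos (2 * Real.pi * ((l * r).val : ℝ) / q) < 1 := by
    intro l hl
    refine lt_of_le_of_ne (Real.cos_le_one _) ?_
    intro hc
    rcases (Real.cos_eq_one_iff _).1 hc with ⟨n, hn⟩
    have hlr : l * r ≠ 0 := by
      haveI := Fact.mk hq
      exact mul_ne_zero hl hr
    have hvpos : 0 < (l * r).val := ZMod.val_pos.2 hlr
    have hvlt : (l * r).val < q := ZMod.val_lt _
    have hq0 : (q : ℝ) ≠ 0 := ne_of_gt hqR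
    have h' : ((n : ℝ) * (2 * Real.pi)) * q = 2 * Real.pi * ((l * r).val : ℝ) := by
      rw [hn]; field_simp
    have hk0 : (2 * Real.pi) * ((n : ℝ) * q) = (2 * Real.pi) * ((l * r).val : ℝ) := by ring_nf; ring_nf at h'; linarith
    have hk : ((l * r).val : ℝ) = (n : ℝ) * q := (mul_left_cancel₀ (by positivity) hk0).symm
    have hkz : ((l * r).val : ℤ) = n * q := by exact_mod_cast hk
    have h1 : 0 < n * (q:ℤ) := by rw [← hkz]; exact_mod_cast hvpos
    have h2 : n * (q:ℤ) < q := by rw [← hkz]; exact_mod_cast hvlt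
    have hn0 : 0 < n := by
      by_contra h
      push_neg at h
      have : n * (q:ℤ) ≤ 0 := mul_nonpos_of_nonpos_of_nonneg h (by positivity)
      linarith
    have : (q:ℤ) ≤ n * q := le_mul_of_one_le_left (by positivity) hn0
    linarith
  constructor
  · have : ∑ l : ZMod q, -(v l) < ∑ l : ZMod q, v l * Real.cos (2 * Real.pi * ((l * r).val : ℝ) / q) := by
      obtain ⟨l0, hl0⟩ : ∃ l : ZMod q, 0 < v l := by
        by_contra h
        push_neg at h
        have : ∀ l : ZMod q, v l = 0 := fun l => le_antisymm (h l) (hv l)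
        simp [this] at hsum
      refine Finset.sum_lt_sum (fun l _ => ?_) ⟨l0, Finset.mem_univ _, ?_⟩
      · nlinarith [hcosgt l, hv l, Real.cos_le_one (2 * Real.pi * ((l * r).val : ℝ) / q)]
      · nlinarith [hcosgt l0]
    rwa [Finset.sum_neg_distrib, hsum] at this
  · have : ∑ l : ZMod q, v l * Real.cos (2 * Real.pi * ((l * r).val : ℝ) / q) < ∑ l : ZMod q, v l := by
      obtain ⟨l0, hl00, hl0⟩ : ∃ l : ZMod q, l ≠ 0 ∧ 0 < v l := by
        by_contra h
        push_neg at h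
        have hz : ∀ l : ZMod q, l ≠ 0 → v l = 0 := fun l hl => le_antisymm (h l hl) (hv l)
        have : ∑ l : ZMod q, v l = v 0 := Finset.sum_eq_single 0 (fun l _ hl => hz l hl) (by simp)
        rw [hsum] at this
        linarith
      refine Finset.sum_lt_sum (fun l _ => ?_) ⟨l0, Finset.mem_univ _, ?_⟩
      · nlinarith [Real.cos_le_one (2 * Real.pi * ((l * r).val : ℝ) / q), hv l, Real.neg_one_le_cos (2 * Real.pi * ((l * r).val : ℝ) / q)]
      · nlinarith [hcoslt l0 hl00]
    rwa [hsum] at this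
end

section
/- Let q be an odd prime and let v be a probability vector on ZMod q with v(−l) = v(l) for all l and v(0) < 1, with associated circulant transition matrix P_{ab} = v(b−a). Then the random walk converges to its uniform stationary distribution: for all a,b ∈ ZMod q, (P^t)_{ab} → 1/q as t → ∞. -/
open scoped BigOperators
open Complex Finset

namespace CirculantProofAux

variable {q : ℕ} [NeZero q]

noncomputable def ψ : AddChar (ZMod q) ℂ := ZMod.stdAddChar

lemma psi_inj : Function.Injective (ψ (q := q) : ZMod q → ℂ) := by
  intro x y h
  apply ZMod.injective_toCircle (N := q)
  apply Subtype.coe_injective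
  simpa [ψ, ZMod.stdAddChar_apply] using h

lemma psi_norm (x : ZMod q) : ‖ψ x‖ = 1 := by
  rw [ψ, ZMod.stdAddChar_apply]
  exact Circle.norm_coe _

lemma psi_conj (x : ZMod q) : (starRingEnd ℂ) (ψ x) = ψ (-x) := by
  rw [ψ, ZMod.stdAddChar_apply, ZMod.stdAddChar_apply, AddChar.map_neg_eq_inv,
    Circle.coe_inv_eq_conj]

lemma psi_re_le_one (x : ZMod q) : (ψ x).re ≤ 1 := by
  have := Complex.abs_re_le_norm (ψ x)
  rw [psi_norm] at this
  exact (abs_le.mp this).2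

lemma psi_re_neg_one_le (x : ZMod q) : -1 ≤ (ψ x).re := by
  have := Complex.abs_re_le_norm (ψ x)
  rw [psi_norm] at this
  exact (abs_le.mp this).1

lemma psi_eq_of_re_extreme {x : ZMod q} {c : ℝ} (hc : |c| = 1) (h : (ψ x).re = c) :
    ψ x = (c : ℂ) := by
  have hn : Complex.normSq (ψ x) = 1 := by
    have := psi_norm x
    rw [← Complex.sq_norm, this, one_pow]
  have him : (ψ x).im = 0 := by
    have h2 : c ^ 2 + (ψ x).im ^ 2 = 1 := by
      rw [← h]
      simpa [Complex.normSq_apply, sq] using hn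
    have hc2 : c ^ 2 = 1 := by
      rw [← _root_.sq_abs, hc, one_pow]
    nlinarith [sq_nonneg (ψ x).im]
  exact Complex.ext (by simpa using h) (by simpa using him)

lemma psi_re_lt_one {x : ZMod q} (hx : x ≠ 0) : (ψ x).re < 1 := by
  rcases (psi_re_le_one x).lt_or_eq with h | h
  · exact h
  · exfalso
    have hc : |(1 : ℝ)| = 1 := by norm_num
    have : ψ x = (1 : ℂ) := by simpa using psi_eq_of_re_extreme (x := x) hc h
    have : ψ x = ψ (0 : ZMod q) := by simpa [AddChar.map_zero_eq_one] using this
    exact hx (psi_inj this)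

lemma psi_re_gt_neg_one (hodd : Odd q) (x : ZMod q) : -1 < (ψ x).re := by
  rcases (psi_re_neg_one_le x).eq_or_lt with h | h
  · exfalso
    have hpsi : ψ x = (-1 : ℂ) := by
      have hc : |(-1 : ℝ)| = 1 := by norm_num
      simpa using psi_eq_of_re_extreme (x := x) hc h.symm
    have hsq : ψ (x + x) = ψ (0 : ZMod q) := by
      rw [AddChar.map_add_eq_mul, hpsi, AddChar.map_zero_eq_one]
      norm_num
    have hxx : x + x = 0 := psi_inj hsq
    have h2 : (2 : ZMod q) * x = 0 := by rw [two_mul]; exact hxx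
    have hu : IsUnit (2 : ZMod q) := by
      have : Nat.Coprime 2 q := Nat.coprime_two_left.mpr hodd
      have := (ZMod.isUnit_iff_coprime 2 q).mpr this
      simpa using this
    have hx0 : x = 0 := by
      rcases hu with ⟨u, hu⟩
      have h3 := congrArg (fun z : ZMod q => ((u⁻¹ : (ZMod q)ˣ) : ZMod q) * z) h2
      simpa [← hu, ← mul_assoc] using h3
    have : ψ (0 : ZMod q) = (-1 : ℂ) := hx0 ▸ hpsi
    rw [AddChar.map_zero_eq_one] at this
    norm_num at this
  · exact h

lemma norm_lambda_lt_one (hq : Nat.Prime q) (hodd : Odd q)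
    (v : ZMod q → ℝ) (hv : ∀ l, 0 ≤ v l) (hsum : ∑ l : ZMod q, v l = 1)
    (hsymm : ∀ l : ZMod q, v (-l) = v l) (h0 : v 0 < 1)
    {k : ZMod q} (hk : k ≠ 0) :
    ‖∑ l : ZMod q, (v l : ℂ) * ψ (k * l)‖ < 1 := by
  haveI : Fact q.Prime := ⟨hq⟩
  set Λ : ℂ := ∑ l : ZMod q, (v l : ℂ) * ψ (k * l) with hΛ
  -- Λ is real
  have hconj : (starRingEnd ℂ) Λ = Λ := by
    rw [hΛ, map_sum]
    refine Fintype.sum_equiv (Equiv.neg (ZMod q)) _ _ fun l => ?_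
    simp only [Equiv.neg_apply, map_mul, Complex.conj_ofReal, psi_conj]
    rw [hsymm]
    congr 2
    ring
  have hreal : Λ = ((Λ.re : ℝ) : ℂ) := (Complex.conj_eq_iff_re.mp hconj).symm
  -- the real part formula
  have hre : Λ.re = ∑ l : ZMod q, v l * (ψ (k * l)).re := by
    rw [hΛ, Complex.re_sum]
    exact Finset.sum_congr rfl fun l _ => by simp [Complex.mul_re]
  -- exists l₀ ≠ 0 with v l₀ > 0
  obtain ⟨l₀, hl₀ne, hl₀pos⟩ : ∃ l : ZMod q, l ≠ 0 ∧ 0 < v l := by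
    by_contra hcon
    push_neg at hcon
    have : ∀ l ∈ (univ : Finset (ZMod q)), l ≠ 0 → v l = 0 := fun l _ hl =>
      le_antisymm (hcon l hl) (hv l)
    have := Finset.sum_eq_single (0 : ZMod q) (fun l hl hne => this l hl hne)
      (fun h => absurd (Finset.mem_univ _) h)
    rw [hsum] at this
    exact absurd this.symm (ne_of_lt h0)
  have hkl₀ : k * l₀ ≠ 0 := mul_ne_zero hk hl₀ne
  -- strict upper bound
  have hupper : Λ.re < 1 := by
    rw [hre, ← hsum]
    refine Finset.sum_lt_sum (fun l _ => ?_) ⟨l₀, Finset.mem_univ _, ?_⟩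
    · calc v l * (ψ (k * l)).re ≤ v l * 1 :=
            mul_le_mul_of_nonneg_left (psi_re_le_one _) (hv l)
        _ = v l := mul_one _
    · calc v l₀ * (ψ (k * l₀)).re < v l₀ * 1 :=
            (mul_lt_mul_iff_right₀ hl₀pos).mpr (psi_re_lt_one hkl₀)
        _ = v l₀ := mul_one _
  -- strict lower bound
  have hlower : -1 < Λ.re := by
    have : (-1 : ℝ) = ∑ l : ZMod q, v l * (-1) := by
      rw [← Finset.sum_mul, hsum, one_mul]
    rw [hre, this]
    refine Finset.sum_lt_sum (fun l _ => ?_) ⟨l₀, Finset.mem_univ _, ?_⟩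
    · exact mul_le_mul_of_nonneg_left (psi_re_gt_neg_one hodd _).le (hv l)
    · exact (mul_lt_mul_iff_right₀ hl₀pos).mpr (psi_re_gt_neg_one hodd _)
  rw [hreal, Complex.norm_real]
  exact abs_lt.mpr ⟨hlower, hupper⟩

lemma step (v : ZMod q → ℝ) (k y : ZMod q) :
    ∑ x : ZMod q, (v (x - y) : ℂ) * ψ (k * x)
      = (∑ l : ZMod q, (v l : ℂ) * ψ (k * l)) * ψ (k * y) := by
  rw [Finset.sum_mul]
  refine (Fintype.sum_equiv (Equiv.addRight y) _ _ fun l => ?_).symm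
  simp only [Equiv.coe_addRight, add_sub_cancel_right]
  rw [mul_assoc, ← AddChar.map_add_eq_mul, mul_add]

lemma eig (v : ZMod q → ℝ) (t : ℕ) (k a : ZMod q) :
    ∑ x : ZMod q, ((Matrix.of fun a b : ZMod q => (v (b - a) : ℂ)) ^ t) a x * ψ (k * x)
      = (∑ l : ZMod q, (v l : ℂ) * ψ (k * l)) ^ t * ψ (k * a) := by
  induction t with
  | zero =>
      simp [Matrix.one_apply]
  | succ t ih =>
      rw [pow_succ]
      calc ∑ x : ZMod q, ((_ ^ t * _ : Matrix (ZMod q) (ZMod q) ℂ)) a x * ψ (k * x)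
          = ∑ x : ZMod q, (∑ y : ZMod q,
              ((Matrix.of fun a b : ZMod q => (v (b - a) : ℂ)) ^ t) a y * (v (x - y) : ℂ))
              * ψ (k * x) := by
            simp only [Matrix.mul_apply, Matrix.of_apply]
        _ = ∑ y : ZMod q, ((Matrix.of fun a b : ZMod q => (v (b - a) : ℂ)) ^ t) a y *
              ∑ x : ZMod q, (v (x - y) : ℂ) * ψ (k * x) := by
            simp_rw [Finset.sum_mul, Finset.mul_sum]
            rw [Finset.sum_comm]
            exact Finset.sum_congr rfl fun y _ => Finset.sum_congr rfl fun x _ => by ring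
        _ = ∑ y : ZMod q, ((Matrix.of fun a b : ZMod q => (v (b - a) : ℂ)) ^ t) a y *
              ((∑ l : ZMod q, (v l : ℂ) * ψ (k * l)) * ψ (k * y)) := by
            simp_rw [step]
        _ = (∑ l : ZMod q, (v l : ℂ) * ψ (k * l)) ^ (t + 1) * ψ (k * a) := by
            simp_rw [← mul_assoc, mul_comm _ (∑ l : ZMod q, (v l : ℂ) * ψ (k * l)), mul_assoc,
              ← Finset.mul_sum, ih, pow_succ]
            ring

lemma inversion (v : ZMod q → ℝ) (t : ℕ) (a b : ZMod q) :
    ((Matrix.of fun a b : ZMod q => (v (b - a) : ℂ)) ^ t) a b * q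
      = ∑ k : ZMod q, (∑ l : ZMod q, (v l : ℂ) * ψ (k * l)) ^ t * ψ (k * (a - b)) := by
  classical
  have key : ∀ k : ZMod q,
      (∑ x : ZMod q, ((Matrix.of fun a b : ZMod q => (v (b - a) : ℂ)) ^ t) a x * ψ (k * x))
        * ψ (k * (-b))
      = (∑ l : ZMod q, (v l : ℂ) * ψ (k * l)) ^ t * ψ (k * (a - b)) := by
    intro k
    rw [eig, mul_assoc, ← AddChar.map_add_eq_mul]
    congr 2
    ring
  calc ((Matrix.of fun a b : ZMod q => (v (b - a) : ℂ)) ^ t) a b * q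
      = ∑ x : ZMod q, ((Matrix.of fun a b : ZMod q => (v (b - a) : ℂ)) ^ t) a x *
          (if x - b = 0 then (q : ℂ) else 0) := by
        refine Eq.symm ?_
        simp only [sub_eq_zero, mul_ite, mul_zero]
        simp [Finset.sum_ite_eq' Finset.univ b]
    _ = ∑ x : ZMod q, ((Matrix.of fun a b : ZMod q => (v (b - a) : ℂ)) ^ t) a x *
          ∑ k : ZMod q, ψ (k * (x - b)) := by
        refine Finset.sum_congr rfl fun x _ => ?_
        congr 1
        have := AddChar.sum_mulShift (ψ := ψ (q := q)) (x - b) (ZMod.isPrimitive_stdAddChar q)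
        rw [this]
        simp [ZMod.card]
    _ = ∑ k : ZMod q,
          (∑ x : ZMod q, ((Matrix.of fun a b : ZMod q => (v (b - a) : ℂ)) ^ t) a x * ψ (k * x))
            * ψ (k * (-b)) := by
        simp_rw [Finset.mul_sum, Finset.sum_mul]
        rw [Finset.sum_comm]
        refine Finset.sum_congr rfl fun k _ => Finset.sum_congr rfl fun x _ => ?_
        rw [mul_assoc, ← AddChar.map_add_eq_mul]
        congr 2
        ring
    _ = ∑ k : ZMod q, (∑ l : ZMod q, (v l : ℂ) * ψ (k * l)) ^ t * ψ (k * (a - b)) :=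
        Finset.sum_congr rfl fun k _ => key k

end CirculantProofAux

open CirculantProofAux in
/-- Convergence to the uniform stationary distribution for the reversible circulant random walk
when `q` is an odd prime, `v` is symmetric and `v 0 < 1`: `(P^t)_{ab} → 1/q` as `t → ∞`. -/
theorem circulant_convergence_to_uniform (q : ℕ) [NeZero q]
    (hq : Nat.Prime q) (hodd : Odd q)
    (v : ZMod q → ℝ) (hv : ∀ l, 0 ≤ v l) (hsum : ∑ l : ZMod q, v l = 1)
    (hsymm : ∀ l : ZMod q, v (-l) = v l) (h0 : v 0 < 1)
    (a b : ZMod q) :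
    Filter.Tendsto (fun t : ℕ => ((Matrix.of fun a b : ZMod q => v (b - a)) ^ t) a b)
      Filter.atTop (nhds (1 / (q : ℝ))) := by
  classical
  have hqC : ((q : ℂ)) ≠ 0 := by
    exact_mod_cast Nat.cast_ne_zero.mpr (NeZero.ne q)
  set Λ : ZMod q → ℂ := fun k => ∑ l : ZMod q, (v l : ℂ) * ψ (k * l) with hΛ
  set f : ℕ → ℂ := fun t => ∑ k : ZMod q, Λ k ^ t * ψ (k * (a - b)) with hf
  -- entrywise identity
  have hentry : ∀ t : ℕ,
      ((Matrix.of fun a b : ZMod q => v (b - a)) ^ t) a b = ((f t) / q).re := by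
    intro t
    have hmap : ((Matrix.of fun a b : ZMod q => v (b - a)) ^ t).map Complex.ofRealHom
        = (Matrix.of fun a b : ZMod q => (v (b - a) : ℂ)) ^ t := by
      have h1 : (Matrix.of fun a b : ZMod q => v (b - a)).map Complex.ofRealHom
          = Matrix.of fun a b : ZMod q => (v (b - a) : ℂ) := by
        ext i j
        simp [Matrix.map_apply]
      calc ((Matrix.of fun a b : ZMod q => v (b - a)) ^ t).map Complex.ofRealHom
          = Complex.ofRealHom.mapMatrix ((Matrix.of fun a b : ZMod q => v (b - a)) ^ t) := rfl
        _ = (Complex.ofRealHom.mapMatrix (Matrix.of fun a b : ZMod q => v (b - a))) ^ t :=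
            map_pow _ _ t
        _ = (Matrix.of fun a b : ZMod q => (v (b - a) : ℂ)) ^ t := by
            rw [RingHom.mapMatrix_apply, h1]
    have hC : ((((Matrix.of fun a b : ZMod q => v (b - a)) ^ t) a b : ℝ) : ℂ)
        = ((Matrix.of fun a b : ZMod q => (v (b - a) : ℂ)) ^ t) a b := by
      rw [← hmap]
      rfl
    have hinv := inversion (q := q) v t a b
    have hPab : ((Matrix.of fun a b : ZMod q => (v (b - a) : ℂ)) ^ t) a b = f t / q := by
      rw [eq_div_iff hqC, hinv, hf]
    rw [← hPab, ← hC, Complex.ofReal_re]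
  have hfun : (fun t : ℕ => ((Matrix.of fun a b : ZMod q => v (b - a)) ^ t) a b)
      = fun t : ℕ => ((f t) / q).re := funext hentry
  rw [hfun]
  -- limit of f
  have hΛ0 : Λ 0 = 1 := by
    rw [hΛ]
    simp only [zero_mul, AddChar.map_zero_eq_one, mul_one]
    rw [← Complex.ofReal_sum, hsum, Complex.ofReal_one]
  have hlim : Filter.Tendsto f Filter.atTop (nhds 1) := by
    have hsumlim : Filter.Tendsto f Filter.atTop
        (nhds (∑ k : ZMod q, if k = 0 then (1 : ℂ) else 0)) := by
      rw [hf]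
      refine tendsto_finset_sum _ fun k _ => ?_
      by_cases hk : k = 0
      · subst hk
        simp only [hΛ0, one_pow, zero_mul, AddChar.map_zero_eq_one, mul_one, if_pos rfl]
        exact tendsto_const_nhds
      · rw [if_neg hk]
        have hnorm := norm_lambda_lt_one (q := q) hq hodd v hv hsum hsymm h0 hk
        have := tendsto_pow_atTop_nhds_zero_of_norm_lt_one hnorm
        simpa using this.mul_const (ψ (k * (a - b)))
    have : (∑ k : ZMod q, if k = 0 then (1 : ℂ) else 0) = 1 := by
      rw [Finset.sum_ite_eq' Finset.univ (0 : ZMod q) (fun _ => (1 : ℂ))]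
      simp
    rwa [this] at hsumlim
  have hdiv : Filter.Tendsto (fun t => f t / q) Filter.atTop (nhds (1 / q)) :=
    hlim.div_const _
  have hre := (Complex.continuous_re.tendsto _).comp hdiv
  have : ((1 : ℂ) / (q : ℂ)).re = 1 / (q : ℝ) := by
    rw [show ((1 : ℂ) / (q : ℂ)) = (((1 / q : ℝ)) : ℂ) by push_cast; ring]
    exact Complex.ofReal_re _
  rwa [this] at hre
end

section
/- Fix integers q ≥ 2 and d ≥ 0. Let m : {0,…,q−1} → ℕ with ∑_j m_j = d and let l : {1,…,q−1} → ℕ with |l| := ∑_k l_k ≤ d. Define l⁺ : {0,…,q−1} → ℕ by l⁺_0 = d−|l| and l⁺_k = l_k for k = 1,…,q−1, and define m⁻ : {1,…,q−1} → ℕ by m⁻_j = m_j. Then the multivariate Krawtchouk polynomials satisfy the duality relation C(d;m)·Q_l(m) = C(d;l⁺)·Q_{m⁻}(l⁺), where C(d;·) is the multinomial coefficient. -/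
open scoped BigOperators

/-- `zE q n = exp(2πi·n/q)`. -/
noncomputable def zE (q n : ℕ) : ℂ :=
  Complex.exp (2 * Real.pi * Complex.I * (n : ℂ) / q)

/-- The generating polynomial `∏_{j=0}^{q-1} (1 + ∑_{k=1}^{q-1} w_k ζ^{jk})^{m_j}` of the
multivariate Krawtchouk polynomials, in the variables `w_1,…,w_{q-1}`. -/
noncomputable def genPoly (q : ℕ) (m : ℕ → ℕ) : MvPolynomial ℕ ℂ :=
  ∏ j ∈ Finset.range q,
    (1 + ∑ k ∈ Finset.Icc 1 (q - 1),
        MvPolynomial.X k * MvPolynomial.C (zE q (j * k))) ^ m j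

/-- The multivariate Krawtchouk polynomial value `Q_l(m)`: the coefficient of
`∏_k w_k^{l_k}` in the generating polynomial. -/
noncomputable def mvKrawtchouk (q : ℕ) (l : ℕ →₀ ℕ) (m : ℕ → ℕ) : ℂ :=
  MvPolynomial.coeff l (genPoly q m)


open Finset MvPolynomial

section helpers

lemma myCoeff_prod {σ ι R : Type*} [CommSemiring R] [DecidableEq σ] [DecidableEq ι]
    (f : ι → MvPolynomial σ R) (d : σ →₀ ℕ) (s : Finset ι) :
    MvPolynomial.coeff d (∏ j ∈ s, f j)
      = ∑ l ∈ Finset.finsuppAntidiag s d, ∏ i ∈ s, MvPolynomial.coeff (l i) (f i) := by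
  have h : ((∏ j ∈ s, f j : MvPolynomial σ R) : MvPowerSeries σ R)
      = ∏ j ∈ s, (f j : MvPowerSeries σ R) :=
    map_prod (MvPolynomial.coeToMvPowerSeries.ringHom) f s
  rw [← MvPolynomial.coeff_coe, h, MvPowerSeries.coeff_prod]
  simp

lemma multinomial_mul_prod (s t : Finset ℕ) (A : ℕ × ℕ → ℕ) (μ : ℕ → ℕ)
    (h : ∀ j ∈ s, ∑ k ∈ t, A (j, k) = μ j) :
    Nat.multinomial s μ * ∏ j ∈ s, Nat.multinomial t (fun k => A (j, k))
      = Nat.multinomial (s ×ˢ t) A := by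
  have hP : 0 < ∏ p ∈ s ×ˢ t, (A p).factorial :=
    Finset.prod_pos fun p _ => Nat.factorial_pos _
  apply Nat.eq_of_mul_eq_mul_left hP
  have hProd : ∏ p ∈ s ×ˢ t, (A p).factorial
      = ∏ j ∈ s, ∏ k ∈ t, (A (j, k)).factorial := Finset.prod_product _ _ _
  have hSum : ∑ p ∈ s ×ˢ t, A p = ∑ j ∈ s, μ j := by
    rw [Finset.sum_product]; exact sum_congr rfl h
  calc (∏ p ∈ s ×ˢ t, (A p).factorial)
        * (Nat.multinomial s μ * ∏ j ∈ s, Nat.multinomial t fun k => A (j, k))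
      = Nat.multinomial s μ * ∏ j ∈ s,
          ((∏ k ∈ t, (A (j, k)).factorial) * Nat.multinomial t fun k => A (j, k)) := by
        rw [hProd, prod_mul_distrib]; ring
    _ = Nat.multinomial s μ * ∏ j ∈ s, (μ j).factorial := by
        congr 1
        refine prod_congr rfl fun j hj => ?_
        rw [Nat.multinomial_spec, h j hj]
    _ = (∑ j ∈ s, μ j).factorial := by rw [mul_comm, Nat.multinomial_spec]
    _ = (∏ p ∈ s ×ˢ t, (A p).factorial) * Nat.multinomial (s ×ˢ t) A := by
        rw [Nat.multinomial_spec, hSum]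

@[to_additive]
lemma prod_swap_product {M : Type*} [CommMonoid M] (s t : Finset ℕ) (f : ℕ × ℕ → M) :
    ∏ p ∈ s ×ˢ t, f p.swap = ∏ p ∈ t ×ˢ s, f p := by
  rw [Finset.prod_product]
  simp only [Prod.swap_prod_mk]
  rw [Finset.prod_comm, ← Finset.prod_product]

lemma multinomial_swap (s t : Finset ℕ) (A : ℕ × ℕ → ℕ) :
    Nat.multinomial (s ×ˢ t) (fun p => A p.swap) = Nat.multinomial (t ×ˢ s) A := by
  rw [Nat.multinomial, Nat.multinomial,
    sum_swap_product s t A, prod_swap_product s t (fun p => (A p).factorial)]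

end helpers
lemma prod_X_pow' (s : Finset ℕ) (h : ℕ → ℕ) :
    ∏ k ∈ s, (X k ^ h k : MvPolynomial ℕ ℂ)
      = monomial (∑ k ∈ s, Finsupp.single k (h k)) 1 := by
  induction s using Finset.cons_induction with
  | empty => simp
  | cons a s ha ih => rw [prod_cons, sum_cons, ih, X_pow_eq_monomial, monomial_mul, one_mul]

lemma coeff_one_add_pow (q : ℕ) (hq : 2 ≤ q) (c : ℕ → ℂ) (n : ℕ) (g : ℕ →₀ ℕ) :
    MvPolynomial.coeff g ((1 + ∑ k ∈ Icc 1 (q-1), X k * C (c k)) ^ n : MvPolynomial ℕ ℂ)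
      = if g.support ⊆ Icc 1 (q-1) ∧ ∑ k ∈ Icc 1 (q-1), g k ≤ n
        then (Nat.multinomial (range q)
            (fun k => if k = 0 then n - ∑ k' ∈ Icc 1 (q-1), g k' else g k) : ℂ)
              * ∏ k ∈ Icc 1 (q-1), c k ^ g k
        else 0 := by
  classical
  have hR : Finset.range q = insert 0 (Finset.Icc 1 (q-1)) := by
    ext x; simp only [mem_range, mem_insert, mem_Icc]; omega
  have h0 : (0:ℕ) ∉ Finset.Icc 1 (q-1) := by simp
  have hIsub : Finset.Icc 1 (q-1) ⊆ Finset.range q := by rw [hR]; exact subset_insert _ _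
  set Ic := Finset.Icc 1 (q-1) with hIc
  have hne0 : ∀ k ∈ Ic, k ≠ 0 := fun k hk hk0 => h0 (hk0 ▸ hk)
  set S := ∑ k' ∈ Ic, g k' with hS
  -- rewrite the base as a sum over range q
  have hP : (1 + ∑ k ∈ Ic, X k * C (c k) : MvPolynomial ℕ ℂ)
      = ∑ k ∈ range q, (if k = 0 then 1 else X k * C (c k)) := by
    rw [hR, sum_insert h0, if_pos rfl]
    congr 1
    exact (sum_congr rfl fun k hk => if_neg (hne0 k hk)).symm
  rw [hP, Finset.sum_pow_eq_sum_piAntidiag]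
  -- each term is a monomial
  have hterm : ∀ h : ℕ → ℕ,
      ((Nat.multinomial (range q) h : MvPolynomial ℕ ℂ)
          * ∏ k ∈ range q, (if k = 0 then 1 else X k * C (c k)) ^ h k)
        = monomial (∑ k ∈ Ic, Finsupp.single k (h k))
            ((Nat.multinomial (range q) h : ℂ) * ∏ k ∈ Ic, c k ^ h k) := by
    intro h
    rw [hR, prod_insert h0, if_pos rfl, one_pow, one_mul]
    have heq : ∏ k ∈ Ic, (if k = 0 then 1 else X k * C (c k) : MvPolynomial ℕ ℂ) ^ h k
        = (∏ k ∈ Ic, (X k : MvPolynomial ℕ ℂ) ^ h k) * C (∏ k ∈ Ic, c k ^ h k) := by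
      rw [map_prod, ← prod_mul_distrib]
      exact prod_congr rfl fun k hk => by rw [if_neg (hne0 k hk), mul_pow, ← map_pow]
    rw [heq, prod_X_pow', ← hR,
      (map_natCast (C : ℂ →+* MvPolynomial ℕ ℂ) (Nat.multinomial (range q) h)).symm,
      mul_comm ((monomial (∑ k ∈ Ic, Finsupp.single k (h k))) 1) (C _), ← mul_assoc,
      ← map_mul, C_mul_monomial, mul_one]
  rw [MvPolynomial.coeff_sum]
  have hterm2 : ∀ h ∈ piAntidiag (range q) n,
      MvPolynomial.coeff g ((Nat.multinomial (range q) h : MvPolynomial ℕ ℂ)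
          * ∏ k ∈ range q, (if k = 0 then 1 else X k * C (c k)) ^ h k)
        = if (∑ k ∈ Ic, Finsupp.single k (h k)) = g
          then (Nat.multinomial (range q) h : ℂ) * ∏ k ∈ Ic, c k ^ h k else 0 := by
    intro h _
    rw [hterm h, coeff_monomial]
  rw [Finset.sum_congr rfl hterm2]
  -- evaluate e_h at a point
  have heval : ∀ (h : ℕ → ℕ) (k' : ℕ),
      (∑ k ∈ Ic, Finsupp.single k (h k)) k' = if k' ∈ Ic then h k' else 0 := by
    intro h k'
    rw [Finsupp.finset_sum_apply]
    simp_rw [Finsupp.single_apply]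
    exact Finset.sum_ite_eq' Ic k' h
  by_cases hcond : (g.support ⊆ Ic ∧ S ≤ n)
  · rw [if_pos hcond]
    obtain ⟨hgs, hSn⟩ := hcond
    set h₀ : ℕ → ℕ := fun k => if k = 0 then n - S else (if k ∈ Ic then g k else 0) with hh₀
    have hgIc : ∀ k, k ∉ Ic → g k = 0 := by
      intro k hk
      by_contra hne
      exact hk (hgs (Finsupp.mem_support_iff.2 hne))
    have hIcval₀ : ∀ k ∈ Ic, h₀ k = g k := by
      intro k hk
      rw [hh₀]
      simp only [if_neg (hne0 k hk), if_pos hk]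
    have hmem : h₀ ∈ piAntidiag (range q) n := by
      rw [mem_piAntidiag]
      constructor
      · rw [hR, sum_insert h0]
        rw [sum_congr rfl hIcval₀, if_pos rfl]
        have hgS : Ic.sum ⇑g = S := rfl
        omega
      · intro i hi
        rw [hR]
        by_cases hi0 : i = 0
        · exact hi0 ▸ mem_insert_self 0 Ic
        · rw [hh₀] at hi
          simp only [if_neg hi0] at hi
          by_cases hiI : i ∈ Ic
          · exact mem_insert_of_mem hiI
          · rw [if_neg hiI] at hi; exact absurd rfl hi
    have he₀ : (∑ k ∈ Ic, Finsupp.single k (h₀ k)) = g := by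
      ext k'
      rw [heval]
      by_cases hk' : k' ∈ Ic
      · rw [if_pos hk', hIcval₀ k' hk']
      · rw [if_neg hk', hgIc k' hk']
    rw [Finset.sum_eq_single_of_mem h₀ hmem]
    · rw [if_pos he₀]
      congr 1
      · congr 1
        refine Nat.multinomial_congr fun k hk => ?_
        by_cases hk0 : k = 0
        · rw [hh₀]; simp [hk0]
        · have hkI : k ∈ Ic := by
            rw [hR] at hk
            rcases mem_insert.1 hk with h'|h'
            · exact absurd h' hk0
            · exact h'
          rw [hIcval₀ k hkI, if_neg hk0]
      · exact prod_congr rfl fun k hk => by rw [hIcval₀ k hk]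
    · intro h hh hne
      rw [if_neg]
      intro he
      apply hne
      rw [mem_piAntidiag] at hh
      have hIcval : ∀ k ∈ Ic, h k = g k := by
        intro k hk
        have hv := heval h k
        rw [he] at hv
        rw [hv, if_pos hk]
      have hsum : ∑ k ∈ Ic, h k = S := by
        rw [sum_congr rfl hIcval]
      have h0val : h 0 = n - S := by
        have hs := hh.1
        rw [hR, sum_insert h0, hsum] at hs
        omega
      funext k
      by_cases hk0 : k = 0
      · rw [hk0, h0val, hh₀]; simp
      · by_cases hkI : k ∈ Ic
        · rw [hIcval k hkI, hIcval₀ k hkI]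
        · have hz : h k = 0 := by
            by_contra hne'
            have hmem' := hh.2 k hne'
            rw [hR] at hmem'
            rcases mem_insert.1 hmem' with h'|h'
            · exact hk0 h'
            · exact hkI h'
          rw [hz, hh₀]
          simp [hk0, hkI]
  · rw [if_neg hcond]
    refine Finset.sum_eq_zero fun h hh => ?_
    rw [if_neg]
    intro he
    apply hcond
    rw [mem_piAntidiag] at hh
    constructor
    · intro k hk
      rw [Finsupp.mem_support_iff, ← he, heval] at hk
      by_cases hkI : k ∈ Ic
      · exact hkI
      · rw [if_neg hkI] at hk; exact absurd rfl hk
    · have hIcval : ∀ k ∈ Ic, g k = h k := by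
        intro k hk
        rw [← he, heval, if_pos hk]
      rw [hS, sum_congr rfl hIcval]
      calc ∑ k ∈ Ic, h k ≤ ∑ k ∈ range q, h k := sum_le_sum_of_subset hIsub
        _ = n := hh.1


lemma krawtchouk_matrix_sum (q d : ℕ) (hq : 2 ≤ q) (μ : ℕ → ℕ)
    (hμ0 : ∀ j, j ∉ Finset.range q → μ j = 0)
    (hμsum : ∑ j ∈ Finset.range q, μ j = d)
    (ν : ℕ →₀ ℕ) (hν0 : ∀ k, k ∉ Finset.Icc 1 (q - 1) → ν k = 0)
    (hνsum : ∑ k ∈ Finset.Icc 1 (q - 1), ν k ≤ d) :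
    (Nat.multinomial (Finset.range q) μ : ℂ) * mvKrawtchouk q ν μ
      = ∑ A ∈ Finset.piAntidiag (Finset.range q ×ˢ Finset.range q) d,
          if (∀ j ∈ Finset.range q, ∑ k ∈ Finset.range q, A (j, k) = μ j)
              ∧ (∀ k ∈ Finset.range q, ∑ j ∈ Finset.range q, A (j, k)
                  = if k = 0 then d - ∑ k' ∈ Finset.Icc 1 (q - 1), ν k' else ν k)
          then (Nat.multinomial (Finset.range q ×ˢ Finset.range q) A : ℂ)
                * ∏ p ∈ Finset.range q ×ˢ Finset.range q, zE q (p.1 * p.2) ^ A p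
          else 0 := by
  classical
  have hR : Finset.range q = insert 0 (Finset.Icc 1 (q-1)) := by
    ext x; simp only [mem_range, mem_insert, mem_Icc]; omega
  have h0 : (0:ℕ) ∉ Finset.Icc 1 (q-1) := by simp
  have hIsub : Finset.Icc 1 (q-1) ⊆ Finset.range q := by rw [hR]; exact subset_insert _ _
  set Ic := Finset.Icc 1 (q-1) with hIc
  set R := Finset.range q with hRdef
  have hne0 : ∀ k ∈ Ic, k ≠ 0 := fun k hk hk0 => h0 (hk0 ▸ hk)
  -- step 1: expand the coefficient of the product
  rw [mvKrawtchouk, genPoly, myCoeff_prod]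
  rw [Finset.mul_sum]
  have hstep : ∀ L : ℕ →₀ (ℕ →₀ ℕ),
      (Nat.multinomial R μ : ℂ) * ∏ j ∈ R, MvPolynomial.coeff (L j)
          ((1 + ∑ k ∈ Ic, X k * C (zE q (j * k))) ^ μ j)
        = if (∀ j ∈ R, (L j).support ⊆ Ic ∧ ∑ k ∈ Ic, L j k ≤ μ j)
          then (Nat.multinomial R μ : ℂ) * ∏ j ∈ R,
              ((Nat.multinomial R
                  (fun k => if k = 0 then μ j - ∑ k' ∈ Ic, L j k' else L j k) : ℂ)
                * ∏ k ∈ Ic, zE q (j * k) ^ L j k)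
          else 0 := by
    intro L
    have : ∀ j ∈ R, MvPolynomial.coeff (L j)
        ((1 + ∑ k ∈ Ic, X k * C (zE q (j * k))) ^ μ j)
      = if (L j).support ⊆ Ic ∧ ∑ k ∈ Ic, L j k ≤ μ j
        then (Nat.multinomial R
            (fun k => if k = 0 then μ j - ∑ k' ∈ Ic, L j k' else L j k) : ℂ)
          * ∏ k ∈ Ic, zE q (j * k) ^ L j k
        else 0 := fun j _ => coeff_one_add_pow q hq (fun k => zE q (j * k)) (μ j) (L j)
    rw [Finset.prod_congr rfl this, Finset.prod_ite_zero, mul_ite, mul_zero]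
  rw [Finset.sum_congr rfl (fun L _ => hstep L)]
  rw [← Finset.sum_filter, ← Finset.sum_filter]
  -- step 2: reindex by the matrix
  set toA : (ℕ →₀ (ℕ →₀ ℕ)) → (ℕ × ℕ → ℕ) :=
    fun L p => if p.2 = 0 then μ p.1 - ∑ k ∈ Ic, L p.1 k else L p.1 p.2 with htoA
  have innermem : ∀ (A : ℕ × ℕ → ℕ) (j k : ℕ),
      (if k ∈ Ic then A (j, k) else 0) ≠ 0 → k ∈ Ic := by
    intro A j k h
    by_cases hk : k ∈ Ic
    · exact hk
    · rw [if_neg hk] at h; exact absurd rfl h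
  set toL : (ℕ × ℕ → ℕ) → (ℕ →₀ (ℕ →₀ ℕ)) :=
    fun A => Finsupp.onFinset R
      (fun j => if j ∈ R then
          Finsupp.onFinset Ic (fun k => if k ∈ Ic then A (j, k) else 0) (innermem A j)
        else 0)
      (fun j hj => by by_contra hjR; exact hj (by simp [hjR])) with htoL
  refine Finset.sum_nbij' toA toL ?_ ?_ ?_ ?_ ?_
  · -- toA maps into the target filter
    intro L hL
    rw [Finset.mem_filter, Finset.mem_finsuppAntidiag] at hL
    obtain ⟨⟨hL1, hL2⟩, hLP⟩ := hL
    have hLz : ∀ j, j ∉ R → L j = 0 := by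
      intro j hj
      by_contra hne
      exact hj (hL2 (Finsupp.mem_support_iff.2 hne))
    have hLIc : ∀ j k, k ∉ Ic → L j k = 0 := by
      intro j k hk
      by_cases hj : j ∈ R
      · by_contra hne
        exact hk ((hLP j hj).1 (Finsupp.mem_support_iff.2 hne))
      · rw [hLz j hj]; rfl
    have hcolL : ∀ k, ∑ j ∈ R, L j k = ν k := by
      intro k
      rw [← hL1, Finsupp.finset_sum_apply]
    have hrow : ∀ j ∈ R, ∑ k ∈ R, toA L (j, k) = μ j := by
      intro j hj
      rw [hR, Finset.sum_insert h0]
      have h1 : toA L (j, 0) = μ j - ∑ k ∈ Ic, L j k := rfl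
      have h2 : ∀ k ∈ Ic, toA L (j, k) = L j k := by
        intro k hk
        show (if k = 0 then μ j - ∑ k' ∈ Ic, L j k' else L j k) = L j k
        exact if_neg (hne0 k hk)
      rw [h1, Finset.sum_congr rfl h2]
      exact Nat.sub_add_cancel (hLP j hj).2
    rw [Finset.mem_filter, Finset.mem_piAntidiag]
    refine ⟨⟨?_, ?_⟩, ?_, ?_⟩
    · rw [Finset.sum_product]
      rw [Finset.sum_congr rfl hrow]
      exact hμsum
    · rintro ⟨j, k⟩ hp
      rw [Finset.mem_product]
      by_cases hk : k = 0
      · subst hk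
        have hp' : μ j - ∑ k ∈ Ic, L j k ≠ 0 := hp
        have : μ j ≠ 0 := fun h => hp' (by omega)
        refine ⟨?_, ?_⟩
        · by_contra hj; exact this (hμ0 j hj)
        · rw [hRdef, Finset.mem_range]; omega
      · have hp0 : (if k = 0 then μ j - ∑ k' ∈ Ic, L j k' else L j k) ≠ 0 := hp
        rw [if_neg hk] at hp0
        have hp := hp0
        have hkIc : k ∈ Ic := by
          by_contra hkI
          exact hp (hLIc j k hkI)
        have hjR : j ∈ R := by
          by_contra hj
          rw [hLz j hj] at hp
          exact hp rfl
        exact ⟨hjR, hIsub hkIc⟩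
    · exact hrow
    · intro k hk
      by_cases hk0 : k = 0
      · subst hk0
        rw [if_pos rfl]
        have h1 : ∀ j ∈ R, toA L (j, 0) = μ j - ∑ k ∈ Ic, L j k := fun j _ => rfl
        rw [Finset.sum_congr rfl h1,
          Finset.sum_tsub_distrib _ (fun j hj => by
            by_cases hjR : j ∈ R
            · exact (hLP j hjR).2
            · exact absurd hjR (by exact fun h => h hj) ), hμsum]
        congr 1
        rw [Finset.sum_comm]
        exact Finset.sum_congr rfl fun k _ => hcolL k
      · rw [if_neg hk0]
        have h2 : ∀ j ∈ R, toA L (j, k) = L j k := by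
          intro j _
          show (if k = 0 then μ j - ∑ k' ∈ Ic, L j k' else L j k) = L j k
          exact if_neg hk0
        rw [Finset.sum_congr rfl h2, hcolL]
  · -- toL maps into the source filter
    intro A hA
    rw [Finset.mem_filter, Finset.mem_piAntidiag] at hA
    obtain ⟨⟨hA1, hA2⟩, hArow, hAcol⟩ := hA
    have hAz : ∀ j k, (j, k) ∉ R ×ˢ R → A (j, k) = 0 := by
      intro j k h
      by_contra hne
      exact h (hA2 (j, k) hne)
    have hbase : ∀ j, toL A j = (if j ∈ R then
        Finsupp.onFinset Ic (fun k => if k ∈ Ic then A (j, k) else 0) (innermem A j)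
        else 0) := fun j => rfl
    have htoLval : ∀ j ∈ R, ∀ k, toL A j k = if k ∈ Ic then A (j, k) else 0 := by
      intro j hj k
      rw [hbase j, if_pos hj]
      rfl
    rw [Finset.mem_filter, Finset.mem_finsuppAntidiag]
    refine ⟨⟨?_, ?_⟩, ?_⟩
    · ext k
      rw [Finsupp.finset_sum_apply]
      rw [Finset.sum_congr rfl (fun j hj => htoLval j hj k)]
      by_cases hk : k ∈ Ic
      · simp only [if_pos hk]
        rw [hAcol k (hIsub hk), if_neg (hne0 k hk)]
      · simp only [if_neg hk]
        rw [hν0 k hk, Finset.sum_const_zero]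
    · exact Finsupp.support_onFinset_subset
    · intro j hj
      constructor
      · have : toL A j = Finsupp.onFinset Ic (fun k => if k ∈ Ic then A (j, k) else 0)
            (innermem A j) := by rw [hbase j, if_pos hj]
        rw [this]
        exact Finsupp.support_onFinset_subset
      · rw [Finset.sum_congr rfl (fun k hk => by rw [htoLval j hj k, if_pos hk])]
        calc ∑ k ∈ Ic, A (j, k) ≤ ∑ k ∈ R, A (j, k) :=
              Finset.sum_le_sum_of_subset hIsub
          _ = μ j := hArow j hj
  · -- left inverse
    intro L hL
    rw [Finset.mem_filter, Finset.mem_finsuppAntidiag] at hL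
    obtain ⟨⟨hL1, hL2⟩, hLP⟩ := hL
    have hLz : ∀ j, j ∉ R → L j = 0 := by
      intro j hj
      by_contra hne
      exact hj (hL2 (Finsupp.mem_support_iff.2 hne))
    have hbase : ∀ j, toL (toA L) j = (if j ∈ R then
        Finsupp.onFinset Ic (fun k => if k ∈ Ic then toA L (j, k) else 0) (innermem (toA L) j)
        else 0) := fun j => rfl
    ext j k
    by_cases hj : j ∈ R
    · have hv : toL (toA L) j k = if k ∈ Ic then toA L (j, k) else 0 := by
        rw [hbase j, if_pos hj]; rfl
      rw [hv]
      by_cases hk : k ∈ Ic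
      · rw [if_pos hk]
        show (if k = 0 then μ j - ∑ k' ∈ Ic, L j k' else L j k) = L j k
        exact if_neg (hne0 k hk)
      · rw [if_neg hk]
        by_contra hne
        exact hk ((hLP j hj).1 (Finsupp.mem_support_iff.2 fun h => hne h.symm))
    · have hv : toL (toA L) j = 0 := by rw [hbase j, if_neg hj]
      rw [hv, hLz j hj]
  · -- right inverse
    intro A hA
    rw [Finset.mem_filter, Finset.mem_piAntidiag] at hA
    obtain ⟨⟨hA1, hA2⟩, hArow, hAcol⟩ := hA
    have hAz : ∀ j k, (j, k) ∉ R ×ˢ R → A (j, k) = 0 := by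
      intro j k h
      by_contra hne
      exact h (hA2 (j, k) hne)
    have hbase : ∀ j, toL A j = (if j ∈ R then
        Finsupp.onFinset Ic (fun k => if k ∈ Ic then A (j, k) else 0) (innermem A j)
        else 0) := fun j => rfl
    have htoLval : ∀ j ∈ R, ∀ k, toL A j k = if k ∈ Ic then A (j, k) else 0 := by
      intro j hj k
      rw [hbase j, if_pos hj]
      rfl
    funext p
    obtain ⟨j, k⟩ := p
    by_cases hk : k = 0
    · subst hk
      have h1 : toA (toL A) (j, 0) = μ j - ∑ k ∈ Ic, toL A j k := rfl
      rw [h1]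
      by_cases hj : j ∈ R
      · have h2 : ∑ k ∈ Ic, toL A j k = ∑ k ∈ Ic, A (j, k) := by
          refine Finset.sum_congr rfl fun k hk => ?_
          rw [htoLval j hj k, if_pos hk]
        have h3 : μ j = A (j, 0) + ∑ k ∈ Ic, A (j, k) := by
          rw [← hArow j hj, hR, Finset.sum_insert h0]
        rw [h2]
        omega
      · have h2 : toL A j = 0 := by rw [hbase j, if_neg hj]
        have h3 : A (j, 0) = 0 := hAz j 0 (by
          rw [Finset.mem_product]; exact fun h => hj h.1)
        rw [h2, h3, hμ0 j hj]
        simp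
    · have h1 : toA (toL A) (j, k) = toL A j k := by
        show (if k = 0 then _ else _) = _
        exact if_neg hk
      rw [h1]
      by_cases hj : j ∈ R
      · rw [htoLval j hj k]
        by_cases hkI : k ∈ Ic
        · rw [if_pos hkI]
        · rw [if_neg hkI]
          refine (hAz j k ?_).symm
          rw [Finset.mem_product]
          intro h
          rw [hR] at h
          rcases Finset.mem_insert.1 h.2 with h'|h'
          · exact hk h'
          · exact hkI h'
      · have h2 : toL A j = 0 := by rw [hbase j, if_neg hj]
        rw [h2]
        refine (hAz j k ?_).symm
        rw [Finset.mem_product]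
        exact fun h => hj h.1
  · -- term equality
    intro L hL
    rw [Finset.mem_filter, Finset.mem_finsuppAntidiag] at hL
    obtain ⟨⟨hL1, hL2⟩, hLP⟩ := hL
    have hrowA : ∀ j ∈ R, ∑ k ∈ R, toA L (j, k) = μ j := by
      intro j hj
      rw [hR, Finset.sum_insert h0]
      have h1 : toA L (j, 0) = μ j - ∑ k ∈ Ic, L j k := rfl
      have h2 : ∀ k ∈ Ic, toA L (j, k) = L j k := by
        intro k hk
        show (if k = 0 then μ j - ∑ k' ∈ Ic, L j k' else L j k) = L j k
        exact if_neg (hne0 k hk)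
      rw [h1, Finset.sum_congr rfl h2]
      exact Nat.sub_add_cancel (hLP j hj).2
    rw [Finset.prod_mul_distrib, ← mul_assoc]
    congr 1
    · -- multinomial part
      rw [← Nat.cast_prod, ← Nat.cast_mul]
      congr 1
      have heq : ∀ j ∈ R, Nat.multinomial R
            (fun k => if k = 0 then μ j - ∑ k' ∈ Ic, L j k' else L j k)
          = Nat.multinomial R (fun k => toA L (j, k)) := by
        intro j _
        refine Nat.multinomial_congr fun k _ => ?_
        rfl
      rw [Finset.prod_congr rfl heq]
      exact multinomial_mul_prod R R (toA L) μ hrowA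
    · -- root of unity part
      rw [Finset.prod_product]
      refine (Finset.prod_congr rfl fun j hj => ?_).symm
      rw [hR, Finset.prod_insert h0]
      have hz : zE q (j * 0) ^ toA L (j, 0) = 1 := by
        rw [mul_zero]
        simp [zE]
      rw [hz, one_mul]
      refine Finset.prod_congr rfl fun k hk => ?_
      have : toA L (j, k) = L j k := by rw [htoA]; exact if_neg (hne0 k hk)
      rw [this]


/-- Duality of the multivariate Krawtchouk polynomials:
`C(d;m)·Q_l(m) = C(d;l⁺)·Q_{m⁻}(l⁺)`, where `l⁺_0 = d - |l|`, `l⁺_k = l_k` for `k ≥ 1`, and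
`m⁻` is `m` with the index `0` removed. -/
theorem mvKrawtchouk_duality (q d : ℕ) (hq : 2 ≤ q)
    (m : ℕ →₀ ℕ) (hm0 : ∀ j, j ∉ Finset.range q → m j = 0)
    (hmsum : ∑ j ∈ Finset.range q, m j = d)
    (l : ℕ →₀ ℕ) (hl0 : ∀ k, k ∉ Finset.Icc 1 (q - 1) → l k = 0)
    (hlsum : ∑ k ∈ Finset.Icc 1 (q - 1), l k ≤ d) :
    (Nat.multinomial (Finset.range q) (⇑m) : ℂ) * mvKrawtchouk q l (⇑m)
      = (Nat.multinomial (Finset.range q)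
            (fun j => if j = 0 then d - ∑ k ∈ Finset.Icc 1 (q - 1), l k else l j) : ℂ) *
          mvKrawtchouk q (Finsupp.filter (fun j => j ≠ 0) m)
            (fun j => if j = 0 then d - ∑ k ∈ Finset.Icc 1 (q - 1), l k else l j) := by
  classical
  have hR : Finset.range q = insert 0 (Finset.Icc 1 (q-1)) := by
    ext x; simp only [Finset.mem_range, Finset.mem_insert, Finset.mem_Icc]; omega
  have h0 : (0:ℕ) ∉ Finset.Icc 1 (q-1) := by simp
  have hIsub : Finset.Icc 1 (q-1) ⊆ Finset.range q := by rw [hR]; exact Finset.subset_insert _ _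
  have hne0 : ∀ k ∈ Finset.Icc 1 (q-1), k ≠ 0 := fun k hk hk0 => h0 (hk0 ▸ hk)
  have h0R : (0:ℕ) ∈ Finset.range q := by rw [hR]; exact Finset.mem_insert_self _ _
  -- the second weight function
  have hLp0 : ∀ j, j ∉ Finset.range q →
      (if j = 0 then d - ∑ k ∈ Finset.Icc 1 (q - 1), l k else l j) = 0 := by
    intro j hj
    have hj0 : j ≠ 0 := fun h => hj (h ▸ h0R)
    rw [if_neg hj0]
    exact hl0 j (fun h => hj (hIsub h))
  have hLpsum : ∑ j ∈ Finset.range q,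
      (if j = 0 then d - ∑ k ∈ Finset.Icc 1 (q - 1), l k else l j) = d := by
    rw [hR, Finset.sum_insert h0, if_pos rfl]
    rw [Finset.sum_congr rfl (fun k hk => if_neg (hne0 k hk))]
    have hrfl : (Finset.Icc 1 (q-1)).sum ⇑l = ∑ k ∈ Finset.Icc 1 (q - 1), l k := rfl
    omega
  have hν₂0 : ∀ k, k ∉ Finset.Icc 1 (q - 1) → (Finsupp.filter (fun j => j ≠ 0) m) k = 0 := by
    intro k hk
    rw [Finsupp.filter_apply]
    by_cases hk0 : k = 0
    · rw [if_neg (by simp [hk0])]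
    · rw [if_pos hk0]
      refine hm0 k (fun h => ?_)
      rw [hR] at h
      rcases Finset.mem_insert.1 h with h'|h'
      · exact hk0 h'
      · exact hk h'
  have hν₂Ic : ∀ k ∈ Finset.Icc 1 (q-1), (Finsupp.filter (fun j => j ≠ 0) m) k = m k := by
    intro k hk
    rw [Finsupp.filter_apply, if_pos (hne0 k hk)]
  have hmIc : m 0 + ∑ k ∈ Finset.Icc 1 (q-1), m k = d := by
    rw [← hmsum, hR, Finset.sum_insert h0]
  have hν₂S : ∑ k ∈ Finset.Icc 1 (q-1), (Finsupp.filter (fun j => j ≠ 0) m) k = d - m 0 := by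
    rw [Finset.sum_congr rfl hν₂Ic]
    have hrfl : (Finset.Icc 1 (q-1)).sum ⇑m = ∑ k ∈ Finset.Icc 1 (q-1), m k := rfl
    omega
  have hν₂sum : ∑ k ∈ Finset.Icc 1 (q - 1), (Finsupp.filter (fun j => j ≠ 0) m) k ≤ d := by
    omega
  rw [krawtchouk_matrix_sum q d hq (⇑m) hm0 hmsum l hl0 hlsum]
  rw [krawtchouk_matrix_sum q d hq
    (fun j => if j = 0 then d - ∑ k ∈ Finset.Icc 1 (q - 1), l k else l j) hLp0 hLpsum
    (Finsupp.filter (fun j => j ≠ 0) m) hν₂0 hν₂sum]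
  -- the column target of the second sum is `m`
  have hmk : ∀ k ∈ Finset.range q,
      (if k = 0 then d - ∑ k' ∈ Finset.Icc 1 (q-1), (Finsupp.filter (fun j => j ≠ 0) m) k'
       else (Finsupp.filter (fun j => j ≠ 0) m) k) = m k := by
    intro k hk
    by_cases hk0 : k = 0
    · subst hk0
      rw [if_pos rfl, hν₂S]
      have : m 0 ≤ d := by omega
      omega
    · rw [if_neg hk0]
      refine hν₂Ic k ?_
      rw [hR] at hk
      rcases Finset.mem_insert.1 hk with h'|h'
      · exact absurd h' hk0
      · exact h'
  -- transpose bijection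
  refine Finset.sum_nbij' (fun A => fun p => A p.swap) (fun A => fun p => A p.swap) ?_ ?_ ?_ ?_ ?_
  · intro A hA
    rw [Finset.mem_piAntidiag] at hA ⊢
    constructor
    · rw [sum_swap_product]; exact hA.1
    · intro p hp
      have := hA.2 p.swap hp
      rw [Finset.mem_product] at this ⊢
      exact ⟨this.2, this.1⟩
  · intro A hA
    rw [Finset.mem_piAntidiag] at hA ⊢
    constructor
    · rw [sum_swap_product]; exact hA.1
    · intro p hp
      have := hA.2 p.swap hp
      rw [Finset.mem_product] at this ⊢
      exact ⟨this.2, this.1⟩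
  · intro A _; funext p; simp
  · intro A _; funext p; simp
  · intro A hA
    have hmulti : (Nat.multinomial (Finset.range q ×ˢ Finset.range q) (fun p => A p.swap) : ℂ)
        = (Nat.multinomial (Finset.range q ×ˢ Finset.range q) A : ℂ) := by
      rw [multinomial_swap]
    have hprod : ∏ p ∈ Finset.range q ×ˢ Finset.range q, zE q (p.1 * p.2) ^ A p.swap
        = ∏ p ∈ Finset.range q ×ˢ Finset.range q, zE q (p.1 * p.2) ^ A p := by
      have h1 : ∏ p ∈ Finset.range q ×ˢ Finset.range q, zE q (p.1 * p.2) ^ A p.swap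
          = ∏ p ∈ Finset.range q ×ˢ Finset.range q,
              (fun p => zE q (p.2 * p.1) ^ A p) p.swap :=
        Finset.prod_congr rfl fun p _ => rfl
      refine h1.trans ((prod_swap_product (Finset.range q) (Finset.range q) (fun p => zE q (p.2 * p.1) ^ A p)).trans
        (Finset.prod_congr rfl fun p _ => ?_))
      show zE q (p.2 * p.1) ^ A p = zE q (p.1 * p.2) ^ A p
      rw [mul_comm p.2 p.1]
    have hiff : ((∀ j ∈ Finset.range q, ∑ k ∈ Finset.range q, A (j, k) = m j)
          ∧ (∀ k ∈ Finset.range q, ∑ j ∈ Finset.range q, A (j, k)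
              = if k = 0 then d - ∑ k' ∈ Finset.Icc 1 (q - 1), l k' else l k))
        ↔ ((∀ j ∈ Finset.range q, ∑ k ∈ Finset.range q, A (k, j)
              = if j = 0 then d - ∑ k ∈ Finset.Icc 1 (q - 1), l k else l j)
          ∧ (∀ k ∈ Finset.range q, ∑ j ∈ Finset.range q, A (k, j)
              = if k = 0 then d - ∑ k' ∈ Finset.Icc 1 (q-1),
                    (Finsupp.filter (fun j => j ≠ 0) m) k'
                else (Finsupp.filter (fun j => j ≠ 0) m) k)) := by
    -- note: A (k,j) with j the outer variable in the first clause
      constructor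
      · rintro ⟨h1, h2⟩
        constructor
        · intro j hj
          exact h2 j hj
        · intro k hk
          rw [hmk k hk]
          exact h1 k hk
      · rintro ⟨h1, h2⟩
        constructor
        · intro j hj
          rw [← hmk j hj]
          exact h2 j hj
        · intro k hk
          exact h1 k hk
    simp only [Prod.swap_prod_mk]
    rw [hmulti, hprod]
    exact if_congr hiff rfl rfl
end

section
/- Fix integers q ≥ 2, d ≥ 0, and a natural number a ≤ d. Then for all w : {1,…,q−1} → ℂ, ∑_{m} C(d;m)·∏_{j=0}^{q−1} (1 + ∑_{k=1}^{q−1} w_k·ζ^{jk})^{m_j} = C(d,a)·(1 + ∑_{k=1}^{q−1} w_k)^a·(q − 1 − ∑_{k=1}^{q−1} w_k)^{d−a}, where the sum on the left is over all m : {0,…,q−1} → ℕ with ∑_j m_j = d and m_0 = a. (This identity expresses the conditional expectation of multivariate Krawtchouk polynomials given the count m_0, reducing them to one-dimensional Krawtchouk polynomials.) -/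
open scoped BigOperators

lemma zE_pow_eq (q k j : ℕ) : zE q (j * k) = (zE q k) ^ j := by
  rw [zE, zE, ← Complex.exp_nat_mul]
  congr 1
  push_cast
  ring

lemma zE_sum_eq_zero (q k : ℕ) (hq : 2 ≤ q) (hk : k ∈ Finset.Icc 1 (q - 1)) :
    ∑ j : Fin q, zE q ((j : ℕ) * k) = 0 := by
  simp only [Finset.mem_Icc] at hk
  have hq0 : (q : ℂ) ≠ 0 := Nat.cast_ne_zero.mpr (by omega)
  have h2 : (2 * (Real.pi:ℂ) * Complex.I) ≠ 0 := by
    simp [Real.pi_ne_zero, Complex.I_ne_zero]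
  have hne : zE q k ≠ 1 := by
    intro h
    rw [zE, Complex.exp_eq_one_iff] at h
    obtain ⟨n, hn⟩ := h
    have hkc : (k : ℂ) = n * q := by
      have h3 : (2 * (Real.pi:ℂ) * Complex.I) * k = (2 * (Real.pi:ℂ) * Complex.I) * (n * q) := by
        field_simp at hn
        linear_combination (2 * (Real.pi:ℂ) * Complex.I) * hn
      exact mul_left_cancel₀ h2 h3
    have hkz : (k : ℤ) = n * q := by exact_mod_cast hkc
    rcases le_or_gt n 0 with h | h
    · have : (n : ℤ) * q ≤ 0 := mul_nonpos_of_nonpos_of_nonneg h (by positivity)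
      omega
    · have : (q : ℤ) ≤ n * q := le_mul_of_one_le_left (by positivity) h
      omega
  have hpow : zE q k ^ q = 1 := by
    rw [zE, ← Complex.exp_nat_mul]
    have h4 : (q : ℂ) * (2 * Real.pi * Complex.I * k / q) = (k : ℂ) * (2 * Real.pi * Complex.I) := by
      field_simp
    rw [h4]
    exact_mod_cast Complex.exp_int_mul_two_pi_mul_I k
  calc ∑ j : Fin q, zE q ((j : ℕ) * k) = ∑ j ∈ Finset.range q, zE q k ^ j := by
        rw [Fin.sum_univ_eq_sum_range (fun j => zE q (j * k)) q]
        exact Finset.sum_congr rfl fun j _ => zE_pow_eq q k j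
    _ = (zE q k ^ q - 1) / (zE q k - 1) := geom_sum_eq hne q
    _ = 0 := by rw [hpow]; simp

/-- Summing the multivariate Krawtchouk generating function over all multinomial
configurations `m` with `∑_j m_j = d` and `m_0 = a` reduces it to a one-dimensional
Krawtchouk generating function:
`∑_m C(d;m) ∏_j (1 + ∑_k w_k ζ^{jk})^{m_j}
  = C(d,a) (1 + ∑_k w_k)^a (q - 1 - ∑_k w_k)^{d-a}`. -/
theorem mvKrawtchouk_conditional_sum (q d a : ℕ) (hq : 2 ≤ q) (ha : a ≤ d)
    (w : ℕ → ℂ) :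
    ∑ m ∈ (Finset.Nat.antidiagonalTuple q d).filter
        (fun m => m ⟨0, by omega⟩ = a),
      (Nat.multinomial Finset.univ m : ℂ) *
        ∏ j : Fin q,
          (1 + ∑ k ∈ Finset.Icc 1 (q - 1), w k * zE q ((j : ℕ) * k)) ^ m j
      = (d.choose a : ℂ) * (1 + ∑ k ∈ Finset.Icc 1 (q - 1), w k) ^ a *
          ((q : ℂ) - 1 - ∑ k ∈ Finset.Icc 1 (q - 1), w k) ^ (d - a) := by
  set i0 : Fin q := ⟨0, by omega⟩ with hi0
  set f : Fin q → ℂ := fun j => 1 + ∑ k ∈ Finset.Icc 1 (q - 1), w k * zE q ((j : ℕ) * k)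
    with hf
  set W : ℂ := ∑ k ∈ Finset.Icc 1 (q - 1), w k with hWdef
  have hW : ∑ k ∈ Finset.Icc 1 (q - 1), w k * zE q ((i0 : ℕ) * k) = W := by
    rw [hWdef]
    refine Finset.sum_congr rfl fun k _ => ?_
    have h0 : ((i0 : ℕ) * k) = 0 := by simp [hi0]
    rw [h0]
    simp [zE]
  have hf0 : f i0 = 1 + W := by rw [hf]; rw [show (fun j => 1 + ∑ k ∈ Finset.Icc 1 (q - 1), w k * zE q ((j : ℕ) * k)) i0 = 1 + ∑ k ∈ Finset.Icc 1 (q - 1), w k * zE q ((i0 : ℕ) * k) from rfl, hW]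
  have hsum_all : ∑ j : Fin q, f j = (q : ℂ) := by
    have : ∑ j : Fin q, f j
        = ∑ j : Fin q, (1 : ℂ) + ∑ k ∈ Finset.Icc 1 (q - 1), w k * ∑ j : Fin q, zE q ((j : ℕ) * k) := by
      rw [hf, Finset.sum_add_distrib]
      congr 1
      rw [Finset.sum_comm]
      exact Finset.sum_congr rfl fun k _ => by rw [Finset.mul_sum]
    rw [this]
    have hz : ∀ k ∈ Finset.Icc 1 (q - 1), w k * ∑ j : Fin q, zE q ((j : ℕ) * k) = 0 :=
      fun k hk => by rw [zE_sum_eq_zero q k hq hk, mul_zero]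
    rw [Finset.sum_congr rfl hz]
    simp
  have hsum_erase : ∑ j ∈ Finset.univ.erase i0, f j = (q : ℂ) - 1 - W := by
    have h5 := Finset.add_sum_erase Finset.univ f (Finset.mem_univ i0)
    rw [hsum_all] at h5
    linear_combination h5 - hf0
  have key : ∀ m ∈ (Finset.Nat.antidiagonalTuple q d).filter (fun m => m i0 = a),
      (Nat.multinomial Finset.univ m : ℂ) * ∏ j : Fin q, f j ^ m j
      = ((d.choose a : ℂ) * f i0 ^ a) *
        ((Nat.multinomial (Finset.univ.erase i0) (Function.update m i0 0) : ℂ) *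
          ∏ i ∈ Finset.univ.erase i0, f i ^ (Function.update m i0 0 i)) := by
    intro m hm
    rw [Finset.mem_filter, Finset.Nat.mem_antidiagonalTuple] at hm
    obtain ⟨hmd, hma⟩ := hm
    have hrest : ∑ i ∈ Finset.univ.erase i0, m i = d - a := by
      have h6 := Finset.add_sum_erase Finset.univ m (Finset.mem_univ i0)
      rw [hmd, hma] at h6
      omega
    have hmulti : Nat.multinomial Finset.univ m
        = d.choose a * Nat.multinomial (Finset.univ.erase i0) (Function.update m i0 0) := by
      have h7 : Nat.multinomial Finset.univ m
          = (m i0 + ∑ i ∈ Finset.univ.erase i0, m i).choose (m i0)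
            * Nat.multinomial (Finset.univ.erase i0) m := by
        conv_lhs => rw [← Finset.insert_erase (Finset.mem_univ i0)]
        exact Nat.multinomial_insert (Finset.notMem_erase i0 _) m
      rw [h7, hma, hrest]
      congr 1
      · congr 1; omega
      · exact Nat.multinomial_congr fun i hi =>
          (Function.update_of_ne (Finset.mem_erase.mp hi).1 0 m).symm
    have hprod : ∏ j : Fin q, f j ^ m j
        = f i0 ^ a * ∏ i ∈ Finset.univ.erase i0, f i ^ (Function.update m i0 0 i) := by
      rw [← Finset.mul_prod_erase Finset.univ _ (Finset.mem_univ i0), hma]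
      congr 1
      exact Finset.prod_congr rfl fun i hi => by
        rw [Function.update_of_ne (Finset.mem_erase.mp hi).1]
    rw [hmulti, hprod]
    push_cast
    ring
  rw [Finset.sum_congr rfl key, ← Finset.mul_sum]
  rw [show ((d.choose a : ℂ) * (1 + W) ^ a * ((q : ℂ) - 1 - W) ^ (d - a))
      = ((d.choose a : ℂ) * (1 + W) ^ a) * ((q : ℂ) - 1 - W) ^ (d - a) from by ring]
  congr 1
  · rw [hf0]
  rw [← hsum_erase, Finset.sum_pow_eq_sum_piAntidiag]
  refine Finset.sum_nbij' (fun m => Function.update m i0 0)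
    (fun k => Function.update k i0 a) ?_ ?_ ?_ ?_ ?_
  · intro m hm
    rw [Finset.mem_filter, Finset.Nat.mem_antidiagonalTuple] at hm
    obtain ⟨hmd, hma⟩ := hm
    rw [Finset.mem_piAntidiag]
    constructor
    · show ∑ i ∈ Finset.univ.erase i0, Function.update m i0 0 i = d - a
      have h6 := Finset.add_sum_erase Finset.univ m (Finset.mem_univ i0)
      rw [hmd, hma] at h6
      have : ∑ i ∈ Finset.univ.erase i0, Function.update m i0 0 i
          = ∑ i ∈ Finset.univ.erase i0, m i :=
        Finset.sum_congr rfl fun i hi => Function.update_of_ne (Finset.mem_erase.mp hi).1 0 m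
      omega
    · intro i hi
      rcases eq_or_ne i i0 with rfl | hne
      · simp at hi
      · exact Finset.mem_erase.mpr ⟨hne, Finset.mem_univ i⟩
  · intro k hk
    rw [Finset.mem_piAntidiag] at hk
    obtain ⟨hks, hksupp⟩ := hk
    have hk0 : k i0 = 0 := by
      by_contra h
      exact (Finset.notMem_erase i0 _) (hksupp i0 h)
    rw [Finset.mem_filter, Finset.Nat.mem_antidiagonalTuple]
    constructor
    · rw [← Finset.add_sum_erase Finset.univ _ (Finset.mem_univ i0), Function.update_self]
      have : ∑ i ∈ Finset.univ.erase i0, Function.update k i0 a i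
          = ∑ i ∈ Finset.univ.erase i0, k i :=
        Finset.sum_congr rfl fun i hi => Function.update_of_ne (Finset.mem_erase.mp hi).1 a k
      rw [this, hks]
      omega
    · exact Function.update_self i0 a k
  · intro m hm
    rw [Finset.mem_filter] at hm
    rw [Function.update_idem, ← hm.2]
    exact Function.update_eq_self i0 m
  · intro k hk
    rw [Finset.mem_piAntidiag] at hk
    have hk0 : k i0 = 0 := by
      by_contra h
      exact (Finset.notMem_erase i0 _) (hk.2 i0 h)
    rw [Function.update_idem, ← hk0]
    exact Function.update_eq_self i0 k
  · intro m hm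
    rfl
end

section
/- Fix an integer q ≥ 2 and l : {1,…,q−1} → ℕ, and write |l| = ∑_k l_k. For each d let n^{(d)} : {0,…,q−1} → ℕ satisfy ∑_j n^{(d)}_j = d, and suppose that for each j = 1,…,q−1 one has n^{(d)}_j/d → z_j as d → ∞, where z_j ≥ 0 and |z| := ∑_{j=1}^{q−1} z_j ≤ 1. Then ((d−|l|)!·∏_{k=1}^{q−1} l_k!/d!)·Q_l(n^{(d)}) → ∏_{k=1}^{q−1} (1 − |z| + ∑_{j=1}^{q−1} z_j·ζ^{jk})^{l_k} as d → ∞. -/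
open scoped BigOperators
open Finset Filter MvPolynomial


lemma cast_nat_sub_max (m i : ℕ) : ((m - i : ℕ) : ℝ) = max ((m : ℝ) - i) 0 := by
  rcases le_total i m with h | h
  · rw [Nat.cast_sub h, max_eq_left]
    simpa using (Nat.cast_le (α := ℝ)).2 h
  · rw [Nat.sub_eq_zero_of_le h, max_eq_right]
    · simp
    · simpa using (Nat.cast_le (α := ℝ)).2 h

lemma descFact_div_pow_tendsto (ν : ℕ → ℕ) (x : ℝ) (hx : 0 ≤ x)
    (h : Tendsto (fun d : ℕ => (ν d : ℝ) / d) atTop (nhds x)) (k : ℕ) :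
    Tendsto (fun d : ℕ => ((ν d).descFactorial k : ℝ) / (d : ℝ) ^ k) atTop
      (nhds (x ^ k)) := by
  have key : ∀ d : ℕ, ((ν d).descFactorial k : ℝ) / (d : ℝ) ^ k
      = ∏ i ∈ range k, max ((ν d : ℝ) / d - (i : ℝ) / d) 0 := by
    intro d
    rw [Nat.descFactorial_eq_prod_range, Nat.cast_prod]
    have : ((d : ℝ)) ^ k = ∏ _i ∈ range k, (d : ℝ) := by
      rw [prod_const, card_range]
    rw [this, ← Finset.prod_div_distrib]
    refine Finset.prod_congr rfl fun i _ => ?_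
    rw [cast_nat_sub_max, ← max_div_div_right (by positivity : (0:ℝ) ≤ d),
      sub_div, zero_div]
  simp only [key]
  have : x ^ k = ∏ i ∈ range k, max (x - 0) 0 := by
    simp [hx, max_eq_left, prod_const, card_range]
  rw [this]
  exact tendsto_finset_prod _ fun i _ =>
    (h.sub (tendsto_const_div_atTop_nhds_zero_nat (i : ℝ))).max tendsto_const_nhds



lemma norm_choose_tendsto (u : Finset ℕ) (a : ℕ → ℕ) (L : ℕ) (hL : ∑ j ∈ u, a j = L)
    (ν : ℕ → ℕ → ℕ) (zl : ℕ → ℝ) (hz : ∀ j ∈ u, 0 ≤ zl j)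
    (hconv : ∀ j ∈ u, Tendsto (fun d : ℕ => (ν d j : ℝ) / d) atTop (nhds (zl j))) :
    Tendsto (fun d : ℕ => (((d - L).factorial : ℝ) / (d.factorial : ℝ)) *
        ∏ j ∈ u, ((ν d j).choose (a j) : ℝ))
      atTop (nhds (∏ j ∈ u, zl j ^ a j / ((a j).factorial : ℝ))) := by
  have hgd : Tendsto (fun d : ℕ => ((d.descFactorial L : ℝ) / (d : ℝ) ^ L)) atTop
      (nhds 1) := by
    have : Tendsto (fun d : ℕ => ((d : ℝ) / d)) atTop (nhds 1) := by
      refine Tendsto.congr' ?_ tendsto_const_nhds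
      filter_upwards [eventually_ge_atTop 1] with d hd
      rw [div_self]
      positivity
    simpa using descFact_div_pow_tendsto id 1 zero_le_one this L
  have hinv : Tendsto (fun d : ℕ => ((d : ℝ) ^ L / (d.descFactorial L : ℝ))) atTop
      (nhds 1) := by
    have := hgd.inv₀ one_ne_zero
    simpa [inv_div] using this
  have hF : Tendsto (fun d : ℕ =>
      (∏ j ∈ u, ((ν d j).descFactorial (a j) : ℝ) / (d : ℝ) ^ (a j)) *
        ((d : ℝ) ^ L / (d.descFactorial L : ℝ)) * (∏ j ∈ u, ((a j).factorial : ℝ))⁻¹)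
      atTop (nhds (∏ j ∈ u, zl j ^ a j / ((a j).factorial : ℝ))) := by
    have hprod : Tendsto (fun d : ℕ =>
        ∏ j ∈ u, ((ν d j).descFactorial (a j) : ℝ) / (d : ℝ) ^ (a j)) atTop
        (nhds (∏ j ∈ u, zl j ^ a j)) :=
      tendsto_finset_prod _ fun j hj =>
        descFact_div_pow_tendsto (fun d => ν d j) (zl j) (hz j hj) (hconv j hj) (a j)
    have := (hprod.mul hinv).mul_const (∏ j ∈ u, ((a j).factorial : ℝ))⁻¹
    rw [mul_one] at this
    convert this using 2
    rw [← Finset.prod_inv_distrib, ← Finset.prod_mul_distrib]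
    exact Finset.prod_congr rfl fun j _ => (div_eq_mul_inv _ _)
  refine Tendsto.congr' ?_ hF
  filter_upwards [eventually_ge_atTop L, eventually_ge_atTop 1] with d hdL hd1
  have hd0 : (d : ℝ) ≠ 0 := by positivity
  have hfact : (d.factorial : ℝ) = ((d - L).factorial : ℝ) * (d.descFactorial L : ℝ) := by
    exact_mod_cast (Nat.factorial_mul_descFactorial hdL).symm
  have hdesc0 : (d.descFactorial L : ℝ) ≠ 0 := by
    have h := Nat.descFactorial_eq_zero_iff_lt (n := d) (k := L)
    intro hc
    have : d.descFactorial L = 0 := by exact_mod_cast hc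
    exact absurd (h.mp this) (not_lt.mpr hdL)
  have hchoose : ∀ j ∈ u, ((ν d j).choose (a j) : ℝ)
      = ((ν d j).descFactorial (a j) : ℝ) / ((a j).factorial : ℝ) := by
    intro j _
    rw [eq_div_iff (by positivity)]
    push_cast [Nat.descFactorial_eq_factorial_mul_choose]
    ring
  rw [Finset.prod_congr rfl hchoose, Finset.prod_div_distrib, Finset.prod_div_distrib,
    hfact]
  have hpow : ∏ j ∈ u, (d : ℝ) ^ (a j) = (d : ℝ) ^ L := by
    rw [Finset.prod_pow_eq_pow_sum, hL]
  rw [hpow]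
  have hfl0 : ((d - L).factorial : ℝ) ≠ 0 := by positivity
  have hpow0 : (d : ℝ) ^ L ≠ 0 := by positivity
  field_simp

lemma sum_pow_comm {R : Type*} [CommSemiring R] (s : Finset ℕ) (f : ℕ → R) (n : ℕ) :
    (∑ i ∈ s, f i) ^ n = ∑ k ∈ Finset.piAntidiag s n,
      (Nat.multinomial s k : R) * ∏ i ∈ s, f i ^ k i := by
  rw [Finset.sum_pow_eq_sum_piAntidiag_of_commute s f
    (fun x _ y _ _ => Commute.all _ _) n]
  exact Finset.sum_congr rfl fun k _ => by rw [Finset.noncommProd_eq_prod]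

lemma single_sum_apply (s : Finset ℕ) (g : ℕ → ℕ) (k' : ℕ) :
    (∑ k ∈ s, Finsupp.single k (g k)) k' = if k' ∈ s then g k' else 0 := by
  rw [Finset.sum_apply']
  simp only [Finsupp.single_apply]
  exact Finset.sum_ite_eq' s k' g

lemma coeff_linear_pow (s : Finset ℕ) (c : ℕ → ℂ) (i : ℕ) (b : ℕ →₀ ℕ)
    (hb : ∀ k, k ∉ s → b k = 0) :
    MvPolynomial.coeff b ((∑ k ∈ s, MvPolynomial.X k * MvPolynomial.C (c k)) ^ i)
      = if ∑ k ∈ s, b k = i then (Nat.multinomial s b : ℂ) * ∏ k ∈ s, c k ^ b k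
        else 0 := by
  classical
  rw [sum_pow_comm, MvPolynomial.coeff_sum]
  have hmono : ∀ g : ℕ → ℕ,
      ((Nat.multinomial s g : MvPolynomial ℕ ℂ) * ∏ k ∈ s, (X k * C (c k)) ^ g k)
      = monomial (∑ k ∈ s, Finsupp.single k (g k))
          ((Nat.multinomial s g : ℂ) * ∏ k ∈ s, c k ^ g k) := by
    intro g
    have h1 : ∀ k ∈ s, (X k * C (c k)) ^ g k
        = (monomial (Finsupp.single k (g k)) (1 : ℂ)) * C (c k ^ g k) := by
      intro k _
      rw [mul_pow, ← C_pow, X_pow_eq_monomial]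
    rw [Finset.prod_congr rfl h1, Finset.prod_mul_distrib, ← monomial_sum_one,
      ← map_prod]
    rw [(MvPolynomial.C_eq_coe_nat (Nat.multinomial s g)).symm]
    rw [mul_comm (monomial _ _) (C _), ← mul_assoc, ← map_mul, C_mul_monomial, mul_one]
  simp only [hmono, MvPolynomial.coeff_monomial]
  by_cases h : ∑ k ∈ s, b k = i
  · rw [if_pos h]
    refine Finset.sum_eq_single_of_mem (⇑b) ?_ ?_ |>.trans ?_
    · rw [Finset.mem_piAntidiag]
      exact ⟨h, fun k hk => by by_contra hks; exact hk (hb k hks)⟩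
    · intro g hg hne
      rw [if_neg]
      intro hgb
      apply hne
      funext k
      by_cases hks : k ∈ s
      · have := DFunLike.congr_fun hgb k
        rwa [single_sum_apply, if_pos hks] at this
      · rw [hb k hks]
        rw [Finset.mem_piAntidiag] at hg
        exact not_imp_comm.1 (hg.2 k) hks
    · rw [if_pos]
      ext k
      rw [single_sum_apply]
      split_ifs with hks
      · rfl
      · exact (hb k hks).symm
  · rw [if_neg h]
    refine Finset.sum_eq_zero fun g hg => ?_
    rw [if_neg]
    intro hgb
    apply h
    rw [Finset.mem_piAntidiag] at hg
    rw [← hg.1]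
    refine Finset.sum_congr rfl fun k hks => ?_
    have h2 := DFunLike.congr_fun hgb k
    rw [single_sum_apply, if_pos hks] at h2
    exact h2.symm

lemma coeff_one_add_linear_pow (s : Finset ℕ) (c : ℕ → ℂ) (m : ℕ) (b : ℕ →₀ ℕ)
    (hb : ∀ k, k ∉ s → b k = 0) :
    MvPolynomial.coeff b ((1 + ∑ k ∈ s, MvPolynomial.X k * MvPolynomial.C (c k)) ^ m)
      = (m.choose (∑ k ∈ s, b k) : ℂ) * (Nat.multinomial s b : ℂ)
        * ∏ k ∈ s, c k ^ b k := by
  classical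
  rw [add_comm (1 : MvPolynomial ℕ ℂ), add_pow, MvPolynomial.coeff_sum]
  have hterm : ∀ i, MvPolynomial.coeff b
      ((∑ k ∈ s, MvPolynomial.X k * MvPolynomial.C (c k)) ^ i * 1 ^ (m - i)
        * (m.choose i : MvPolynomial ℕ ℂ))
      = if ∑ k ∈ s, b k = i then
          (m.choose i : ℂ) * ((Nat.multinomial s b : ℂ) * ∏ k ∈ s, c k ^ b k)
        else 0 := by
    intro i
    rw [one_pow, mul_one, ← MvPolynomial.C_eq_coe_nat, mul_comm,
      MvPolynomial.coeff_C_mul, coeff_linear_pow s c i b hb]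
    split_ifs <;> simp
  simp only [hterm]
  rw [Finset.sum_ite_eq (Finset.range (m + 1)) (∑ k ∈ s, b k)
    (fun i => (m.choose i : ℂ) * ((Nat.multinomial s b : ℂ) * ∏ k ∈ s, c k ^ b k))]
  split_ifs with h
  · ring
  · have : m.choose (∑ k ∈ s, b k) = 0 := by
      apply Nat.choose_eq_zero_of_lt
      simpa [Nat.lt_succ_iff, not_le] using fun hc => h (Finset.mem_range.mpr (Nat.lt_succ_of_le hc))
    rw [this]
    simp

lemma coeff_prod_polys (u : Finset ℕ) (f : ℕ → MvPolynomial ℕ ℂ) (l : ℕ →₀ ℕ) :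
    MvPolynomial.coeff l (∏ j ∈ u, f j)
      = ∑ A ∈ Finset.finsuppAntidiag u l, ∏ j ∈ u, MvPolynomial.coeff (A j) (f j) := by
  classical
  have hcast : ((∏ j ∈ u, f j : MvPolynomial ℕ ℂ) : MvPowerSeries ℕ ℂ)
      = ∏ j ∈ u, (f j : MvPowerSeries ℕ ℂ) := by
    have h := map_prod MvPolynomial.coeToMvPowerSeries.ringHom f u
    simp only [MvPolynomial.coeToMvPowerSeries.ringHom_apply] at h
    exact h
  rw [← MvPolynomial.coeff_coe, hcast, MvPowerSeries.coeff_prod]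
  exact Finset.sum_congr rfl fun A _ => Finset.prod_congr rfl fun j _ =>
    MvPolynomial.coeff_coe _ _

lemma key_coeff (sF : Finset ℕ) (cc : ℕ → ℕ → ℂ) (m : ℕ → ℕ) (l : ℕ →₀ ℕ)
    (hl : ∀ k, k ∉ sF → l k = 0) (u : Finset ℕ) :
    MvPolynomial.coeff l (∏ j ∈ u,
        (1 + ∑ k ∈ sF, MvPolynomial.X k * MvPolynomial.C (cc j k)) ^ m j)
      = ∑ A ∈ Finset.finsuppAntidiag u l, ∏ j ∈ u,
          (((m j).choose (∑ k ∈ sF, A j k) : ℂ) * (Nat.multinomial sF (A j) : ℂ)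
            * ∏ k ∈ sF, cc j k ^ (A j k)) := by
  classical
  rw [coeff_prod_polys]
  refine Finset.sum_congr rfl fun A hA => Finset.prod_congr rfl fun j hj => ?_
  rw [Finset.mem_finsuppAntidiag] at hA
  apply coeff_one_add_linear_pow
  intro k hk
  have hsum : (∑ j' ∈ u, A j') k = 0 := by
    rw [hA.1]
    exact hl k hk
  rw [Finset.sum_apply'] at hsum
  exact (Finset.sum_eq_zero_iff.mp hsum) j hj

lemma single_sum_apply' {N : Type*} [AddCommMonoid N] (s : Finset ℕ) (g : ℕ → N) (k' : ℕ) :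
    (∑ k ∈ s, Finsupp.single k (g k)) k' = if k' ∈ s then g k' else 0 := by
  classical
  rw [Finset.sum_apply']
  simp only [Finsupp.single_apply]
  exact Finset.sum_ite_eq' s k' g

lemma ident (u sF : Finset ℕ) (l : ℕ →₀ ℕ) (hl : ∀ k, k ∉ sF → l k = 0)
    (y : ℕ → ℕ → ℂ) :
    ∑ A ∈ Finset.finsuppAntidiag u l, ∏ k ∈ sF,
        (((l k).factorial : ℂ) * ∏ j ∈ u, (y j k ^ (A j k) / ((A j k).factorial : ℂ)))
      = ∏ k ∈ sF, (∑ j ∈ u, y j k) ^ l k := by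
  classical
  have hrhs : ∏ k ∈ sF, (∑ j ∈ u, y j k) ^ l k
      = ∑ p ∈ sF.pi (fun k => Finset.piAntidiag u (l k)),
          ∏ x ∈ sF.attach,
            (((l x.1).factorial : ℂ) *
              ∏ j ∈ u, (y j x.1 ^ (p x.1 x.2 j) / ((p x.1 x.2 j).factorial : ℂ))) := by
    rw [← Finset.prod_sum sF (fun k => Finset.piAntidiag u (l k))
      (fun k g => ((l k).factorial : ℂ) * ∏ j ∈ u, (y j k ^ (g j) / ((g j).factorial : ℂ)))]
    refine Finset.prod_congr rfl fun k _ => ?_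
    rw [sum_pow_comm]
    refine Finset.sum_congr rfl fun g hg => ?_
    rw [Finset.mem_piAntidiag] at hg
    have hspec := Nat.multinomial_spec u g
    rw [hg.1] at hspec
    have hne : (∏ j ∈ u, ((g j).factorial : ℂ)) ≠ 0 := by
      refine Finset.prod_ne_zero_iff.mpr fun j _ => ?_
      exact_mod_cast (Nat.factorial_pos (g j)).ne'
    have hcast : (Nat.multinomial u g : ℂ) * ∏ j ∈ u, ((g j).factorial : ℂ)
        = ((l k).factorial : ℂ) := by
      rw [← Nat.cast_prod, ← Nat.cast_mul, mul_comm]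
      exact_mod_cast congrArg (Nat.cast (R := ℂ)) hspec
    rw [Finset.prod_div_distrib, mul_comm ((l k).factorial : ℂ) _,
      div_mul_eq_mul_div, eq_div_iff hne]
    linear_combination (∏ i ∈ u, y i k ^ g i) * hcast
  rw [hrhs]
  set pbar : (∀ a ∈ sF, ℕ → ℕ) → ℕ → ℕ → ℕ :=
    fun p k j => if hk : k ∈ sF then p k hk j else 0 with hpbar
  set toA : (∀ a ∈ sF, ℕ → ℕ) → (ℕ →₀ (ℕ →₀ ℕ)) :=
    fun p => ∑ j ∈ u, Finsupp.single j
      (∑ k ∈ sF, Finsupp.single k (pbar p k j)) with htoAdef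
  have htoA : ∀ p j k, (toA p) j k
      = if j ∈ u then (if k ∈ sF then pbar p k j else 0) else 0 := by
    intro p j k
    rw [htoAdef]
    simp only
    rw [single_sum_apply' u _ j]
    split_ifs with h1 h2
    · rw [single_sum_apply' sF _ k, if_pos h2]
    · rw [single_sum_apply' sF _ k, if_neg h2]
    · rfl
  refine Finset.sum_nbij' (i := fun A => fun k _ => fun j => A j k) (j := toA)
    ?_ ?_ ?_ ?_ ?_
  · -- hi
    intro A hA
    rw [Finset.mem_finsuppAntidiag] at hA
    rw [Finset.mem_pi]
    intro k hk
    rw [Finset.mem_piAntidiag]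
    refine ⟨?_, ?_⟩
    · have h2 : (∑ j ∈ u, A j) k = l k := by rw [hA.1]
      rwa [Finset.sum_apply'] at h2
    · intro j hj
      by_contra hju
      have h0 : A j = 0 := Finsupp.notMem_support_iff.mp (fun hs => hju (hA.2 hs))
      exact hj (show (A j) k = 0 by rw [h0]; rfl)
  · -- hj
    intro p hp
    rw [Finset.mem_pi] at hp
    rw [Finset.mem_finsuppAntidiag]
    refine ⟨?_, ?_⟩
    · ext k
      rw [Finset.sum_apply']
      by_cases hk : k ∈ sF
      · have hpk := hp k hk
        rw [Finset.mem_piAntidiag] at hpk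
        calc ∑ j ∈ u, (toA p) j k = ∑ j ∈ u, p k hk j := by
              refine Finset.sum_congr rfl fun j hj => ?_
              rw [htoA, if_pos hj, if_pos hk]
              exact dif_pos hk
          _ = l k := hpk.1
      · calc ∑ j ∈ u, (toA p) j k = ∑ j ∈ u, 0 := by
              refine Finset.sum_congr rfl fun j hj => ?_
              rw [htoA, if_pos hj, if_neg hk]
          _ = l k := by simp [hl k hk]
    · intro j hjs
      rw [Finsupp.mem_support_iff] at hjs
      by_contra hju
      apply hjs
      ext k
      rw [htoA, if_neg hju]
      rfl
  · -- left_inv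
    intro A hA
    rw [Finset.mem_finsuppAntidiag] at hA
    ext j k
    rw [htoA]
    by_cases hju : j ∈ u
    · rw [if_pos hju]
      by_cases hk : k ∈ sF
      · rw [if_pos hk]
        exact dif_pos hk
      · rw [if_neg hk]
        have h2 : (∑ j' ∈ u, A j') k = 0 := by rw [hA.1]; exact hl k hk
        rw [Finset.sum_apply'] at h2
        exact (Finset.sum_eq_zero_iff.mp h2 j hju).symm
    · rw [if_neg hju]
      have h0 : A j = 0 := Finsupp.notMem_support_iff.mp (fun hs => hju (hA.2 hs))
      rw [h0]
      rfl
  · -- right_inv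
    intro p hp
    rw [Finset.mem_pi] at hp
    funext k hk j
    rw [htoA]
    by_cases hju : j ∈ u
    · rw [if_pos hju, if_pos hk]
      exact dif_pos hk
    · rw [if_neg hju]
      have hpk := hp k hk
      rw [Finset.mem_piAntidiag] at hpk
      by_contra hne
      exact hju (hpk.2 j (fun h0 => hne h0.symm))
  · -- values
    intro A hA
    rw [← Finset.prod_attach sF (fun k => (((l k).factorial : ℂ) *
      ∏ j ∈ u, (y j k ^ (A j k) / ((A j k).factorial : ℂ))))]

lemma sum_range_split {M : Type*} [AddCommMonoid M] (q : ℕ) (hq : 2 ≤ q) (f : ℕ → M) :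
    ∑ j ∈ Finset.range q, f j = f 0 + ∑ j ∈ Finset.Icc 1 (q - 1), f j := by
  have h1 : Finset.Icc 1 (q - 1) = Finset.Ico 1 q := by
    rw [← Finset.Ico_add_one_right_eq_Icc]
    congr 1
    omega
  rw [Finset.range_eq_Ico, Finset.sum_eq_sum_Ico_succ_bot (by omega : 0 < q), h1]

/-- Limit of the normalized multivariate Krawtchouk polynomials as `d → ∞`:
if `n^{(d)}_j / d → z_j` for `j = 1,…,q-1`, then
`h_l Q_l(n^{(d)}) → ∏_k (1 - |z| + ∑_j z_j ζ^{jk})^{l_k}`. -/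
theorem mvKrawtchouk_limit (q : ℕ) (hq : 2 ≤ q)
    (l : ℕ →₀ ℕ) (hl0 : ∀ k, k ∉ Finset.Icc 1 (q - 1) → l k = 0)
    (n : ℕ → ℕ → ℕ) (hn : ∀ d, ∑ j ∈ Finset.range q, n d j = d)
    (z : ℕ → ℝ) (hz : ∀ j ∈ Finset.Icc 1 (q - 1), 0 ≤ z j)
    (hzsum : ∑ j ∈ Finset.Icc 1 (q - 1), z j ≤ 1)
    (hconv : ∀ j ∈ Finset.Icc 1 (q - 1),
      Filter.Tendsto (fun d : ℕ => (n d j : ℝ) / d) Filter.atTop (nhds (z j))) :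
    Filter.Tendsto
      (fun d : ℕ =>
        ((((d - ∑ k ∈ Finset.Icc 1 (q - 1), l k).factorial *
              ∏ k ∈ Finset.Icc 1 (q - 1), (l k).factorial : ℕ) : ℂ) /
            (d.factorial : ℂ)) * mvKrawtchouk q l (n d))
      Filter.atTop
      (nhds (∏ k ∈ Finset.Icc 1 (q - 1),
        (((1 - ∑ j ∈ Finset.Icc 1 (q - 1), z j : ℝ) : ℂ) +
            ∑ j ∈ Finset.Icc 1 (q - 1), (z j : ℂ) * zE q (j * k)) ^ l k)) := by
  classical
  set sI := Finset.Icc 1 (q - 1) with hsI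
  set u := Finset.range q with hu
  set L := ∑ k ∈ sI, l k with hL
  set P := ∏ k ∈ sI, (l k).factorial with hP
  set zl : ℕ → ℝ := fun j => if j = 0 then 1 - ∑ k ∈ sI, z k else z j with hzl
  set y : ℕ → ℕ → ℂ := fun j k => ((zl j : ℝ) : ℂ) * zE q (j * k) with hy
  have hmem : ∀ j ∈ u, j ≠ 0 → j ∈ sI := by
    intro j hj hj0
    rw [hu, Finset.mem_range] at hj
    rw [hsI, Finset.mem_Icc]
    omega
  have hzl0 : ∀ j ∈ u, 0 ≤ zl j := by
    intro j hj
    simp only [hzl]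
    by_cases hj0 : j = 0
    · rw [if_pos hj0]
      linarith
    · rw [if_neg hj0]
      exact hz j (hmem j hj hj0)
  have hconv' : ∀ j ∈ u, Tendsto (fun d : ℕ => (n d j : ℝ) / d) atTop (nhds (zl j)) := by
    intro j hj
    by_cases hj0 : j = 0
    · subst hj0
      have hzl00 : zl 0 = 1 - ∑ k ∈ sI, z k := by simp [hzl]
      rw [hzl00]
      have heq : ∀ᶠ d : ℕ in atTop, (1 : ℝ) - ∑ k ∈ sI, (n d k : ℝ) / d
          = (n d 0 : ℝ) / d := by
        filter_upwards [eventually_ge_atTop 1] with d hd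
        have hd0 : (d : ℝ) ≠ 0 := by positivity
        have hcast : ∑ j ∈ Finset.range q, (n d j : ℝ) = (d : ℝ) := by
          exact_mod_cast congrArg (Nat.cast (R := ℝ)) (hn d)
        rw [sum_range_split q hq (fun j => (n d j : ℝ))] at hcast
        rw [← Finset.sum_div, eq_div_iff hd0, sub_mul, one_mul, div_mul_cancel₀ _ hd0]
        linarith [hcast]
      exact Tendsto.congr' heq
        (tendsto_const_nhds.sub (tendsto_finset_sum _ fun k hk => hconv k hk))
    · have hzlj : zl j = z j := by simp [hzl, hj0]
      rw [hzlj]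
      exact hconv j (hmem j hj hj0)
  have hQ : ∀ d, mvKrawtchouk q l (n d)
      = ∑ A ∈ Finset.finsuppAntidiag u l, ∏ j ∈ u,
          (((n d j).choose (∑ k ∈ sI, A j k) : ℂ) * (Nat.multinomial sI (A j) : ℂ)
            * ∏ k ∈ sI, zE q (j * k) ^ (A j k)) := by
    intro d
    exact key_coeff sI (fun j k => zE q (j * k)) (n d) l hl0 u
  simp only [hQ, Finset.mul_sum]
  have hval : ∏ k ∈ sI, (((1 - ∑ j ∈ sI, z j : ℝ) : ℂ)
        + ∑ j ∈ sI, (z j : ℂ) * zE q (j * k)) ^ l k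
      = ∑ A ∈ Finset.finsuppAntidiag u l,
          ((∏ j ∈ u, zl j ^ (∑ k ∈ sI, A j k)
              / (((∑ k ∈ sI, A j k).factorial : ℕ) : ℝ) : ℝ) : ℂ)
            * ((P : ℂ) * ∏ j ∈ u, ((Nat.multinomial sI (A j) : ℂ)
              * ∏ k ∈ sI, zE q (j * k) ^ (A j k))) := by
    have hck : ∀ k ∈ sI, (((1 - ∑ j ∈ sI, z j : ℝ) : ℂ)
        + ∑ j ∈ sI, (z j : ℂ) * zE q (j * k)) = ∑ j ∈ u, y j k := by
      intro k _
      rw [hu, sum_range_split q hq (fun j => y j k)]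
      congr 1
      · have h1 : zE q 0 = 1 := by
          simp [zE]
        simp [hy, hzl, h1]
      · refine Finset.sum_congr rfl fun j hj => ?_
        have hj0 : j ≠ 0 := by
          have := (Finset.mem_Icc.mp hj).1
          omega
        simp only [hy, hzl]
        rw [if_neg hj0]
    have hck' : ∀ k ∈ sI, (((1 - ∑ j ∈ sI, z j : ℝ) : ℂ)
        + ∑ j ∈ sI, (z j : ℂ) * zE q (j * k)) ^ l k = (∑ j ∈ u, y j k) ^ l k :=
      fun k hk => by rw [hck k hk]
    rw [Finset.prod_congr rfl hck', ← ident u sI l hl0 y]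
    refine Finset.sum_congr rfl fun A hA => ?_
    have hAterm : ∀ j, ((zl j : ℂ) ^ (∑ k ∈ sI, A j k)
          / (((∑ k ∈ sI, A j k).factorial : ℕ) : ℂ))
          * ((Nat.multinomial sI (A j) : ℂ) * ∏ k ∈ sI, zE q (j * k) ^ (A j k))
        = ∏ k ∈ sI, (y j k ^ (A j k) / ((A j k).factorial : ℂ)) := by
      intro j
      have hspec := Nat.multinomial_spec sI (A j)
      have hfacne : (((∑ k ∈ sI, A j k).factorial : ℕ) : ℂ) ≠ 0 := by
        exact_mod_cast (Nat.factorial_pos _).ne'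
      have hprodne : (∏ k ∈ sI, ((A j k).factorial : ℂ)) ≠ 0 := by
        refine Finset.prod_ne_zero_iff.mpr fun k _ => ?_
        exact_mod_cast (Nat.factorial_pos _).ne'
      have hspecC : (∏ k ∈ sI, ((A j k).factorial : ℂ))
          * (Nat.multinomial sI (A j) : ℂ)
          = (((∑ k ∈ sI, A j k).factorial : ℕ) : ℂ) := by
        rw [← Nat.cast_prod, ← Nat.cast_mul]
        exact_mod_cast congrArg (Nat.cast (R := ℂ)) hspec
      simp only [hy, mul_pow]
      rw [Finset.prod_div_distrib, Finset.prod_mul_distrib,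
        Finset.prod_pow_eq_pow_sum]
      rw [div_mul_eq_mul_div, div_eq_div_iff hfacne hprodne, ← hspecC]
      ring
    calc ∏ k ∈ sI, (((l k).factorial : ℂ)
            * ∏ j ∈ u, (y j k ^ (A j k) / ((A j k).factorial : ℂ)))
        = (P : ℂ) * ∏ k ∈ sI, ∏ j ∈ u, (y j k ^ (A j k) / ((A j k).factorial : ℂ)) := by
          rw [Finset.prod_mul_distrib, hP]
          push_cast
          ring
      _ = (P : ℂ) * ∏ j ∈ u, ∏ k ∈ sI, (y j k ^ (A j k) / ((A j k).factorial : ℂ)) := by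
          rw [Finset.prod_comm]
      _ = (P : ℂ) * ∏ j ∈ u, (((zl j : ℂ) ^ (∑ k ∈ sI, A j k)
            / (((∑ k ∈ sI, A j k).factorial : ℕ) : ℂ))
            * ((Nat.multinomial sI (A j) : ℂ) * ∏ k ∈ sI, zE q (j * k) ^ (A j k))) := by
          rw [Finset.prod_congr rfl fun j _ => (hAterm j)]
      _ = ((∏ j ∈ u, zl j ^ (∑ k ∈ sI, A j k)
              / (((∑ k ∈ sI, A j k).factorial : ℕ) : ℝ) : ℝ) : ℂ)
            * ((P : ℂ) * ∏ j ∈ u, ((Nat.multinomial sI (A j) : ℂ)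
              * ∏ k ∈ sI, zE q (j * k) ^ (A j k))) := by
          push_cast
          rw [Finset.prod_mul_distrib]
          ring
  rw [hval]
  refine tendsto_finset_sum _ fun A hA => ?_
  have hAmem := Finset.mem_finsuppAntidiag.mp hA
  have hσ : ∑ j ∈ u, (∑ k ∈ sI, A j k) = L := by
    rw [Finset.sum_comm, hL]
    refine Finset.sum_congr rfl fun k _ => ?_
    have h2 : (∑ j ∈ u, A j) k = l k := by rw [hAmem.1]
    rwa [Finset.sum_apply'] at h2
  have hre := norm_choose_tendsto u (fun j => ∑ k ∈ sI, A j k) L hσ n zl hzl0 hconv'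
  have hre' := Tendsto.mul_const ((P : ℂ) * ∏ j ∈ u, ((Nat.multinomial sI (A j) : ℂ)
      * ∏ k ∈ sI, zE q (j * k) ^ (A j k)))
    ((Complex.continuous_ofReal.tendsto _).comp hre)
  refine Tendsto.congr (f₁ := fun d : ℕ =>
      (((((d - L).factorial : ℝ) / (d.factorial : ℝ))
          * ∏ j ∈ u, ((n d j).choose (∑ k ∈ sI, A j k) : ℝ) : ℝ) : ℂ)
        * ((P : ℂ) * ∏ j ∈ u, ((Nat.multinomial sI (A j) : ℂ)
            * ∏ k ∈ sI, zE q (j * k) ^ (A j k)))) (fun d => ?_) hre'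
  push_cast
  simp only [Finset.prod_mul_distrib]
  ring
end

section
/- Fix an integer q ≥ 2 and 𝔪 : {0,…,q−1} → ℝ. For each d let n^{(d)} : {0,…,q−1} → ℕ satisfy ∑_j n^{(d)}_j = d and (n^{(d)}_j − d/q)/√d → 𝔪_j as d → ∞ for each j. Then for every w : {1,…,q−1} → ℂ, ∏_{j=0}^{q−1} (1 + d^{−1/2}·∑_{k=1}^{q−1} w_k·ζ^{jk})^{n^{(d)}_j} → exp(−(1/(2q))·∑_{j=0}^{q−1} (∑_{k=1}^{q−1} w_k·ζ^{jk})² + ∑_{j=0}^{q−1} 𝔪_j·∑_{k=1}^{q−1} w_k·ζ^{jk}) as d → ∞. (This is the generating-function form of the central limit theorem for the multivariate Krawtchouk polynomials.) -/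
open scoped BigOperators

open Filter Complex

noncomputable def ldiff (z : ℂ) : ℂ :=
  if z = 0 then -(1/2) else (Complex.log (1+z) - z)/z^2

lemma ldiff_spec (z : ℂ) : Complex.log (1+z) - z = z^2 * ldiff z := by
  unfold ldiff
  split
  · simp [*]
  · field_simp

lemma logTaylor_three (z : ℂ) : Complex.logTaylor 3 z = z - z^2/2 := by
  simp [Complex.logTaylor_succ, Complex.logTaylor_zero]
  ring

lemma ldiff_bound {z : ℂ} (hz : ‖z‖ ≤ 1/2) : ‖ldiff z - (-(1/2))‖ ≤ ‖z‖ := by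
  rcases eq_or_ne z 0 with rfl | h0
  · simp [ldiff]
  · have hz1 : ‖z‖ < 1 := lt_of_le_of_lt hz (by norm_num)
    have hzpos : (0:ℝ) < ‖z‖ := norm_pos_iff.mpr h0
    have key : ldiff z - (-(1/2)) = (Complex.log (1+z) - Complex.logTaylor 3 z)/z^2 := by
      rw [logTaylor_three]
      unfold ldiff
      rw [if_neg h0]
      field_simp
      ring
    rw [key, norm_div, norm_pow]
    have hb := Complex.norm_log_sub_logTaylor_le 2 hz1
    have hinv : (1 - ‖z‖)⁻¹ ≤ 2 := by
      rw [inv_le_comm₀ (by linarith) (by norm_num)]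
      linarith
    have : ‖Complex.log (1+z) - Complex.logTaylor 3 z‖ ≤ ‖z‖^3 := by
      norm_num at hb
      have hnn : (0:ℝ) ≤ ‖z‖^3 := by positivity
      have hinv0 : (0:ℝ) ≤ (1 - ‖z‖)⁻¹ := by
        rw [inv_nonneg]; linarith
      nlinarith [hb]
    rw [div_le_iff₀ (by positivity)]
    calc ‖Complex.log (1+z) - Complex.logTaylor 3 z‖ ≤ ‖z‖^3 := this
      _ = ‖z‖ * ‖z‖^2 := by ring

lemma ldiff_tendsto : Filter.Tendsto ldiff (nhds 0) (nhds (-(1/2))) := by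
  rw [← tendsto_sub_nhds_zero_iff]
  apply squeeze_zero_norm' ?_ tendsto_norm_zero
  have : ∀ᶠ z : ℂ in nhds 0, ‖z‖ ≤ 1/2 := by
    have := Metric.closedBall_mem_nhds (0:ℂ) (by norm_num : (0:ℝ) < 1/2)
    filter_upwards [this] with z hz
    simpa [Metric.mem_closedBall, dist_eq_norm] using hz
  filter_upwards [this] with z hz using ldiff_bound hz

lemma zE_pow (q j k : ℕ) : zE q (j*k) = (zE q k)^j := by
  unfold zE
  rw [← Complex.exp_nat_mul]
  congr 1
  push_cast
  ring

lemma two_pi_I_ne : (2 * (Real.pi:ℂ) * Complex.I) ≠ 0 := by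
  simp [Real.pi_ne_zero, Complex.I_ne_zero, Complex.ofReal_ne_zero]

lemma zE_ne_one {q k : ℕ} (hq : 2 ≤ q) (hk1 : 1 ≤ k) (hk2 : k ≤ q-1) : zE q k ≠ 1 := by
  intro h
  unfold zE at h
  rw [Complex.exp_eq_one_iff] at h
  obtain ⟨m, hm⟩ := h
  have hq0 : (q:ℂ) ≠ 0 := by
    exact_mod_cast Nat.cast_ne_zero.mpr (by omega)
  have h2 : (k:ℂ) = (m:ℂ) * q := by
    field_simp at hm
    refine mul_left_cancel₀ two_pi_I_ne ?_
    linear_combination (2 * (Real.pi:ℂ) * Complex.I) * hm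
  have h3 : (k:ℤ) = m * q := by exact_mod_cast h2
  have hkq : (k:ℤ) < q := by
    have : k < q := by omega
    exact_mod_cast this
  have hk1' : (1:ℤ) ≤ k := by exact_mod_cast hk1
  have hq' : (0:ℤ) < q := by exact_mod_cast (by omega : 0 < q)
  rcases le_or_gt m 0 with hm0 | hm0
  · nlinarith
  · have : (1:ℤ) ≤ m := hm0
    nlinarith

lemma zE_pow_q {q k : ℕ} (hq : 2 ≤ q) : (zE q k)^q = 1 := by
  unfold zE
  rw [← Complex.exp_nat_mul]
  have hq0 : (q:ℂ) ≠ 0 := by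
    exact_mod_cast Nat.cast_ne_zero.mpr (by omega)
  have : (q:ℂ) * (2 * Real.pi * Complex.I * k / q) = k * (2 * Real.pi * Complex.I) := by
    field_simp
  rw [this, Complex.exp_nat_mul_two_pi_mul_I]

lemma sum_zE_zero {q : ℕ} (hq : 2 ≤ q) (w : ℕ → ℂ) :
    ∑ j ∈ Finset.range q, ∑ k ∈ Finset.Icc 1 (q-1), w k * zE q (j*k) = 0 := by
  rw [Finset.sum_comm]
  refine Finset.sum_eq_zero fun k hk => ?_
  simp only [Finset.mem_Icc] at hk
  have h1 : ∑ j ∈ Finset.range q, w k * zE q (j*k)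
      = w k * ∑ j ∈ Finset.range q, (zE q k)^j := by
    rw [Finset.mul_sum]
    exact Finset.sum_congr rfl fun j _ => by rw [zE_pow]
  rw [h1, geom_sum_eq (zE_ne_one hq hk.1 hk.2), zE_pow_q hq]
  simp

/-- Central limit theorem for the multivariate Krawtchouk generating function: if
`(n^{(d)}_j - d/q)/√d → 𝔪_j`, then
`∏_j (1 + d^{-1/2} ∑_k w_k ζ^{jk})^{n^{(d)}_j}
  → exp(-(1/(2q)) ∑_j (∑_k w_k ζ^{jk})² + ∑_j 𝔪_j ∑_k w_k ζ^{jk})`. -/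
theorem mvKrawtchouk_CLT_genfun (q : ℕ) (hq : 2 ≤ q) (𝔪 : ℕ → ℝ)
    (n : ℕ → ℕ → ℕ) (hn : ∀ d, ∑ j ∈ Finset.range q, n d j = d)
    (hconv : ∀ j ∈ Finset.range q,
      Filter.Tendsto (fun d : ℕ => ((n d j : ℝ) - (d : ℝ) / q) / Real.sqrt d)
        Filter.atTop (nhds (𝔪 j)))
    (w : ℕ → ℂ) :
    Filter.Tendsto
      (fun d : ℕ =>
        ∏ j ∈ Finset.range q,
          (1 + ((Real.sqrt d : ℝ) : ℂ)⁻¹ *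
              ∑ k ∈ Finset.Icc 1 (q - 1), w k * zE q (j * k)) ^ n d j)
      Filter.atTop
      (nhds (Complex.exp
        (-(1 / (2 * (q : ℂ))) *
            ∑ j ∈ Finset.range q, (∑ k ∈ Finset.Icc 1 (q - 1), w k * zE q (j * k)) ^ 2 +
          ∑ j ∈ Finset.range q, (𝔪 j : ℂ) *
            ∑ k ∈ Finset.Icc 1 (q - 1), w k * zE q (j * k)))) := by
  classical
  set S : ℕ → ℂ := fun j => ∑ k ∈ Finset.Icc 1 (q - 1), w k * zE q (j * k) with hSdef
  have hrepl : ∀ j : ℕ, (∑ k ∈ Finset.Icc 1 (q - 1), w k * zE q (j * k)) = S j :=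
    fun _ => rfl
  simp only [hrepl]
  have hS0 : ∑ j ∈ Finset.range q, S j = 0 := sum_zE_zero hq w
  have hqC : (q:ℂ) ≠ 0 := Nat.cast_ne_zero.mpr (by omega)
  have hqR : (q:ℝ) ≠ 0 := Nat.cast_ne_zero.mpr (by omega)
  -- sqrt facts
  have hsq : Tendsto (fun d : ℕ => Real.sqrt d) atTop atTop := by
    have h1 := (tendsto_rpow_atTop (by norm_num : (0:ℝ) < 1/2)).comp
      (tendsto_natCast_atTop_atTop (R := ℝ))
    exact h1.congr fun d => (Real.sqrt_eq_rpow _).symm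
  have hsqinv : Tendsto (fun d : ℕ => (Real.sqrt d)⁻¹) atTop (nhds 0) :=
    hsq.inv_tendsto_atTop
  have hsqinvC : Tendsto (fun d : ℕ => ((Real.sqrt d : ℝ) : ℂ)⁻¹) atTop (nhds 0) := by
    have h2 : Tendsto (fun d : ℕ => (((Real.sqrt d)⁻¹ : ℝ) : ℂ)) atTop (nhds ((0:ℝ):ℂ)) :=
      (Complex.continuous_ofReal.tendsto _).comp hsqinv
    simpa [Complex.ofReal_inv] using h2
  have hz : ∀ j : ℕ, Tendsto (fun d : ℕ => ((Real.sqrt d : ℝ) : ℂ)⁻¹ * S j) atTop (nhds 0) := by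
    intro j
    simpa using hsqinvC.mul_const (S j)
  -- eventual smallness
  have hsmall : ∀ᶠ d : ℕ in atTop, ∀ j ∈ Finset.range q,
      ‖((Real.sqrt d : ℝ) : ℂ)⁻¹ * S j‖ < 1/2 := by
    rw [Filter.eventually_all_finset]
    intro j _
    have h12 : ∀ᶠ x : ℂ in nhds 0, ‖x‖ < 1/2 := by
      have hb := Metric.ball_mem_nhds (0:ℂ) (by norm_num : (0:ℝ) < 1/2)
      filter_upwards [hb] with x hx
      simpa [dist_eq_norm] using hx
    exact (hz j).eventually h12
  -- product equals exp of sum of logs, eventually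
  have heq : ∀ᶠ d : ℕ in atTop,
      (∏ j ∈ Finset.range q, (1 + ((Real.sqrt d : ℝ) : ℂ)⁻¹ * S j) ^ n d j)
        = Complex.exp (∑ j ∈ Finset.range q,
            (n d j : ℂ) * Complex.log (1 + ((Real.sqrt d : ℝ) : ℂ)⁻¹ * S j)) := by
    filter_upwards [hsmall] with d hd
    rw [Complex.exp_sum]
    refine Finset.prod_congr rfl fun j hj => ?_
    have hne : (1 + ((Real.sqrt d : ℝ) : ℂ)⁻¹ * S j) ≠ 0 := by
      intro h
      have h1 : ‖((Real.sqrt d : ℝ) : ℂ)⁻¹ * S j‖ < 1/2 := hd j hj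
      have h2 : ((Real.sqrt d : ℝ) : ℂ)⁻¹ * S j = -1 := by linear_combination h
      rw [h2] at h1
      norm_num at h1
    rw [Complex.exp_nat_mul, Complex.exp_log hne]
  -- part A
  have hA : Tendsto (fun d : ℕ => ∑ j ∈ Finset.range q,
      (n d j : ℂ) * (((Real.sqrt d : ℝ) : ℂ)⁻¹ * S j)) atTop
      (nhds (∑ j ∈ Finset.range q, (𝔪 j : ℂ) * S j)) := by
    have hlim : Tendsto (fun d : ℕ => ∑ j ∈ Finset.range q,
        ((((n d j : ℝ) - (d:ℝ)/q)/Real.sqrt d : ℝ) : ℂ) * S j) atTop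
        (nhds (∑ j ∈ Finset.range q, (𝔪 j : ℂ) * S j)) := by
      refine tendsto_finset_sum _ fun j hj => ?_
      exact ((Complex.continuous_ofReal.tendsto _).comp (hconv j hj)).mul_const (S j)
    refine Filter.Tendsto.congr' ?_ hlim
    filter_upwards [Filter.eventually_ge_atTop 1] with d hd
    have hdpos : (0:ℝ) < d := by exact_mod_cast hd
    have hs0 : Real.sqrt d ≠ 0 := ne_of_gt (Real.sqrt_pos.mpr hdpos)
    have hsC : ((Real.sqrt d : ℝ) : ℂ) ≠ 0 := Complex.ofReal_ne_zero.mpr hs0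
    have step : ∀ j ∈ Finset.range q,
        ((((n d j : ℝ) - (d:ℝ)/q)/Real.sqrt d : ℝ) : ℂ) * S j
          = (n d j : ℂ) * (((Real.sqrt d : ℝ) : ℂ)⁻¹ * S j)
            - ((d : ℂ)/((q:ℂ) * ((Real.sqrt d : ℝ) : ℂ))) * S j := by
      intro j _
      push_cast
      field_simp
    rw [Finset.sum_congr rfl step, Finset.sum_sub_distrib, ← Finset.mul_sum, hS0,
      mul_zero, sub_zero]
  -- part B
  have hB : Tendsto (fun d : ℕ => ∑ j ∈ Finset.range q,
      (n d j : ℂ) * (Complex.log (1 + ((Real.sqrt d : ℝ) : ℂ)⁻¹ * S j)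
        - ((Real.sqrt d : ℝ) : ℂ)⁻¹ * S j)) atTop
      (nhds (∑ j ∈ Finset.range q, (1/(q:ℂ)) * (S j)^2 * (-(1/2)))) := by
    refine tendsto_finset_sum _ fun j hj => ?_
    have hnd : Tendsto (fun d : ℕ => ((n d j : ℝ)/(d:ℝ))) atTop (nhds (1/(q:ℝ))) := by
      have h0 : Tendsto (fun d : ℕ =>
          (((n d j : ℝ) - (d:ℝ)/q)/Real.sqrt d) * (Real.sqrt d)⁻¹) atTop (nhds (𝔪 j * 0)) :=
        (hconv j hj).mul hsqinv
      rw [mul_zero] at h0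
      rw [← tendsto_sub_nhds_zero_iff]
      refine Filter.Tendsto.congr' ?_ h0
      filter_upwards [Filter.eventually_ge_atTop 1] with d hd
      have hdpos : (0:ℝ) < d := by exact_mod_cast hd
      have hd0 : (d:ℝ) ≠ 0 := ne_of_gt hdpos
      have hs0 : Real.sqrt d ≠ 0 := ne_of_gt (Real.sqrt_pos.mpr hdpos)
      have hss : Real.sqrt d * Real.sqrt d = d := Real.mul_self_sqrt (le_of_lt hdpos)
      calc ((n d j : ℝ) - (d:ℝ)/q)/Real.sqrt d * (Real.sqrt d)⁻¹
          = ((n d j : ℝ) - (d:ℝ)/q) / (Real.sqrt d * Real.sqrt d) := by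
            rw [← div_eq_mul_inv, div_div]
        _ = ((n d j : ℝ) - (d:ℝ)/q) / d := by rw [hss]
        _ = (n d j : ℝ)/d - 1/q := by
            rw [sub_div, div_div, mul_comm, ← div_div, div_self hd0]
    have hndC : Tendsto (fun d : ℕ => ((n d j : ℂ)/(d:ℂ))) atTop (nhds (1/(q:ℂ))) := by
      have h2 : Tendsto (fun d : ℕ => (((n d j : ℝ)/(d:ℝ) : ℝ) : ℂ)) atTop
          (nhds ((1/(q:ℝ) : ℝ) : ℂ)) :=
        (Complex.continuous_ofReal.tendsto _).comp hnd
      have h3 : Tendsto (fun d : ℕ => ((n d j : ℂ)/(d:ℂ))) atTop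
          (nhds ((1/(q:ℝ) : ℝ) : ℂ)) := by
        refine h2.congr fun d => ?_
        push_cast
        ring
      simpa using h3
    have hmain : Tendsto (fun d : ℕ =>
        ((n d j : ℂ)/(d:ℂ)) * (S j)^2 * ldiff (((Real.sqrt d : ℝ) : ℂ)⁻¹ * S j)) atTop
        (nhds ((1/(q:ℂ)) * (S j)^2 * (-(1/2)))) := by
      have hld : Tendsto (fun d : ℕ => ldiff (((Real.sqrt d : ℝ) : ℂ)⁻¹ * S j)) atTop
          (nhds (-(1/2))) := ldiff_tendsto.comp (hz j)
      exact (hndC.mul_const ((S j)^2)).mul hld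
    refine Filter.Tendsto.congr' ?_ hmain
    filter_upwards [Filter.eventually_ge_atTop 1] with d hd
    have hdpos : (0:ℝ) < d := by exact_mod_cast hd
    have hdC : (d:ℂ) ≠ 0 := by
      exact_mod_cast Nat.cast_ne_zero.mpr (by omega : d ≠ 0)
    have hsq2 : ((Real.sqrt d : ℝ) : ℂ)^2 = (d:ℂ) := by
      rw [← Complex.ofReal_pow, Real.sq_sqrt (le_of_lt hdpos)]
      push_cast
      ring
    rw [ldiff_spec]
    have hz2 : (((Real.sqrt d : ℝ) : ℂ)⁻¹ * S j)^2 = (S j)^2 / (d:ℂ) := by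
      rw [mul_pow, inv_pow, hsq2]
      ring
    rw [hz2]
    field_simp
  -- combine
  have hT : Tendsto (fun d : ℕ => ∑ j ∈ Finset.range q,
      (n d j : ℂ) * Complex.log (1 + ((Real.sqrt d : ℝ) : ℂ)⁻¹ * S j)) atTop
      (nhds ((∑ j ∈ Finset.range q, (𝔪 j : ℂ) * S j)
        + ∑ j ∈ Finset.range q, (1/(q:ℂ)) * (S j)^2 * (-(1/2)))) := by
    refine (hA.add hB).congr fun d => ?_
    rw [← Finset.sum_add_distrib]
    exact Finset.sum_congr rfl fun j _ => by ring
  have hval : (∑ j ∈ Finset.range q, (𝔪 j : ℂ) * S j)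
      + ∑ j ∈ Finset.range q, (1/(q:ℂ)) * (S j)^2 * (-(1/2))
      = -(1 / (2 * (q : ℂ))) * ∑ j ∈ Finset.range q, (S j)^2
        + ∑ j ∈ Finset.range q, (𝔪 j : ℂ) * S j := by
    rw [Finset.mul_sum, add_comm]
    congr 1
    exact Finset.sum_congr rfl fun j _ => by ring
  have hfinal := (Complex.continuous_exp.tendsto _).comp hT
  rw [← hval]
  refine Filter.Tendsto.congr' ?_ hfinal
  filter_upwards [heq] with d hd
  exact hd.symm
end
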